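/- arXiv:1602.01020 — 12 statements merged into one kernel-verified Lean document; each statement's English description precedes it below -/
import Mathlib

section
/- Let $[x_i-\tau_i, x_i+\tau_i]$, $i=1,\dots,n$, be closed intervals in $\mathbb{R}$ with $\tau_i>0$ such that their union is a single closed interval. Let $x = \left(\sum_{i=1}^n \tau_i x_i\right)/\left(\sum_{i=1}^n \tau_i\right)$. Then the interval $\left[x - \sum_{i=1}^n \tau_i,\ x + \sum_{i=1}^n \tau_i\right]$ contains $\bigcup_{i=1}^n [x_i-\tau_i, x_i+\tau_i]$. -/
/-!
Write `aᵢ = xᵢ - τᵢ` and let `m = min aᵢ`. Since the union is connected, `[m, aᵢ)` is covered by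
the intervals with `aₖ < aᵢ`, so `xᵢ - m ≤ τᵢ + 2 ∑_{aₖ < aᵢ} τₖ`. Multiplying by `τᵢ` and summing,
every product `τᵢ τₖ` with `i ≠ k` is counted at most twice, hence `∑ τᵢ (xᵢ - m) ≤ (∑ τᵢ)²`, i.e.
`x̄ - ∑ τᵢ ≤ m`. The right endpoint follows by applying this to `-x`.
-/

open Set MeasureTheory Finset

section Combinatorics

variable {ι α : Type*} [Fintype ι] [LinearOrder α] (a : ι → α) {w : ι → ℝ}

lemma add_sum_filter_lt_add_sum_filter_gt_le_sum (hw : ∀ i, 0 ≤ w i) (i : ι) :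
    w i + ∑ k with a k < a i, w k + ∑ k with a i < a k, w k ≤ ∑ k, w k := by
  classical
  rw [sum_filter, sum_filter, ← Fintype.sum_ite_eq' i w, ← sum_add_distrib, ← sum_add_distrib]
  refine sum_le_sum fun k _ => ?_
  have := hw k
  split_ifs <;> grind

lemma sum_mul_add_two_mul_sum_filter_lt_le_sq (hw : ∀ i, 0 ≤ w i) :
    ∑ i, w i * (w i + 2 * ∑ k with a k < a i, w k) ≤ (∑ i, w i) ^ 2 := by
  have hswap : ∑ i, ∑ k with a k < a i, w i * w k = ∑ i, ∑ k with a i < a k, w i * w k := by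
    refine (sum_comm' (s' := fun k => {i | a k < a i}) (t' := univ) fun i k => by simp).trans ?_
    simp only [mul_comm]
  calc ∑ i, w i * (w i + 2 * ∑ k with a k < a i, w k)
      = ∑ i, w i * (w i + ∑ k with a k < a i, w k + ∑ k with a i < a k, w k) := by
        simp only [mul_add, sum_add_distrib, mul_sum, two_mul] at hswap ⊢
        rw [hswap]
        ring
    _ ≤ ∑ i, w i * ∑ k, w k :=
        sum_le_sum fun i _ => mul_le_mul_of_nonneg_left
          (add_sum_filter_lt_add_sum_filter_gt_le_sum a hw i) (hw i)
    _ = (∑ i, w i) ^ 2 := by rw [sq, sum_mul]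

end Combinatorics

section Intervals

variable {ι : Type*}

lemma sub_le_sum_of_Ico_subset_biUnion_Icc {s : Finset ι} {a b : ι → ℝ} {c d : ℝ}
    (hab : ∀ k ∈ s, a k ≤ b k) (hcov : Ico c d ⊆ ⋃ k ∈ s, Icc (a k) (b k)) :
    d - c ≤ ∑ k ∈ s, (b k - a k) := by
  have hvol : volume (Ico c d) ≤ ∑ k ∈ s, volume (Icc (a k) (b k)) :=
    (measure_mono hcov).trans (measure_biUnion_finset_le _ _)
  simp only [Real.volume_Ico, Real.volume_Icc] at hvol
  rwa [← ENNReal.ofReal_sum_of_nonneg fun k hk => sub_nonneg.2 (hab k hk),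
    ENNReal.ofReal_le_ofReal_iff (sum_nonneg fun k hk => sub_nonneg.2 (hab k hk))] at hvol

lemma sub_le_sum_filter_lt_of_isPreconnected_iUnion_Icc [Fintype ι] {a b : ι → ℝ}
    (hab : ∀ k, a k ≤ b k) (hconn : IsPreconnected (⋃ k, Icc (a k) (b k))) (i j : ι) :
    a j - a i ≤ ∑ k with a k < a j, (b k - a k) := by
  have hmem : ∀ k, a k ∈ ⋃ k, Icc (a k) (b k) := fun k => mem_iUnion.2 ⟨k, left_mem_Icc.2 (hab k)⟩
  refine sub_le_sum_of_Ico_subset_biUnion_Icc (fun k _ => hab k) fun y hy => ?_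
  obtain ⟨k, hk⟩ :=
    mem_iUnion.1 (hconn.ordConnected.out (hmem i) (hmem j) (Ico_subset_Icc_self hy))
  exact mem_biUnion (mem_filter.2 ⟨mem_univ k, hk.1.trans_lt hy.2⟩) hk

variable {x τ : ι → ℝ}

lemma isPreconnected_iUnion_Icc_neg (hconn : IsPreconnected (⋃ i, Icc (x i - τ i) (x i + τ i))) :
    IsPreconnected (⋃ i, Icc (-x i - τ i) (-x i + τ i)) := by
  convert hconn.image _ continuous_neg.continuousOn using 1
  simp only [image_iUnion, image_neg_Icc, neg_add', neg_sub', sub_neg_eq_add]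

variable [Fintype ι]

lemma sum_mul_div_sum_sub_sum_le (hτ : ∀ i, 0 < τ i)
    (hconn : IsPreconnected (⋃ i, Icc (x i - τ i) (x i + τ i))) (j : ι) :
    (∑ i, τ i * x i) / (∑ i, τ i) - ∑ i, τ i ≤ x j - τ j := by
  obtain ⟨i₀, -, hi₀⟩ := exists_min_image univ (fun i => x i - τ i) ⟨j, mem_univ j⟩
  set m := x i₀ - τ i₀
  have hT : 0 < ∑ i, τ i := sum_pos (fun i _ => hτ i) ⟨j, mem_univ j⟩
  have hgap : ∀ i, x i - m ≤ τ i + 2 * ∑ k with x k - τ k < x i - τ i, τ k := by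
    intro i
    have := sub_le_sum_filter_lt_of_isPreconnected_iUnion_Icc
      (fun k => by linarith [hτ k]) hconn i₀ i
    simp only [add_sub_sub_cancel, ← two_mul, ← mul_sum] at this
    linarith
  have hmoment : ∑ i, τ i * (x i - m) ≤ (∑ i, τ i) ^ 2 :=
    (sum_le_sum fun i _ => mul_le_mul_of_nonneg_left (hgap i) (hτ i).le).trans
      (sum_mul_add_two_mul_sum_filter_lt_le_sq _ fun i => (hτ i).le)
  have hsplit : ∑ i, τ i * (x i - m) = ∑ i, τ i * x i - (∑ i, τ i) * m := by
    simp only [mul_sub, sum_sub_distrib, sum_mul]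
  rw [div_sub' hT.ne', div_le_iff₀ hT]
  nlinarith [hi₀ j (mem_univ j)]

lemma le_sum_mul_div_sum_add_sum (hτ : ∀ i, 0 < τ i)
    (hconn : IsPreconnected (⋃ i, Icc (x i - τ i) (x i + τ i))) (j : ι) :
    x j + τ j ≤ (∑ i, τ i * x i) / (∑ i, τ i) + ∑ i, τ i := by
  have := sum_mul_div_sum_sub_sum_le hτ (isPreconnected_iUnion_Icc_neg hconn) j
  simp only [mul_neg, sum_neg_distrib, neg_div] at this
  linarith

end Intervals

theorem stmt_0_general (n : ℕ) (x τ : Fin n → ℝ) (hτ : ∀ i, 0 < τ i)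
    (hconn : IsPreconnected (⋃ i, Set.Icc (x i - τ i) (x i + τ i))) :
    (⋃ i, Set.Icc (x i - τ i) (x i + τ i)) ⊆
      Set.Icc ((∑ i, τ i * x i) / (∑ i, τ i) - ∑ i, τ i)
        ((∑ i, τ i * x i) / (∑ i, τ i) + ∑ i, τ i) := by
  intro y hy
  obtain ⟨j, hj⟩ := mem_iUnion.1 hy
  exact ⟨(sum_mul_div_sum_sub_sum_le hτ hconn j).trans hj.1,
    hj.2.trans (le_sum_mul_div_sum_add_sum hτ hconn j)⟩

/-- Goodman–Goodman interval lemma: if the union of the closed intervals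
`[x i - τ i, x i + τ i]` is a single closed interval (i.e. connected), then it is
contained in `[x̄ - ∑ τ i, x̄ + ∑ τ i]`, where `x̄` is the `τ`-weighted average of the `x i`. -/
theorem stmt_0 (n : ℕ) (hn : 1 ≤ n) (x τ : Fin n → ℝ) (hτ : ∀ i, 0 < τ i)
    (hconn : IsPreconnected (⋃ i, Set.Icc (x i - τ i) (x i + τ i))) :
    (⋃ i, Set.Icc (x i - τ i) (x i + τ i)) ⊆
      Set.Icc ((∑ i, τ i * x i) / (∑ i, τ i) - ∑ i, τ i)
        ((∑ i, τ i * x i) / (∑ i, τ i) + ∑ i, τ i) :=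
  stmt_0_general n x τ hτ hconn
end

section
/- Let $Q$ be a convex body in $\mathbb{R}^d$ (a compact convex set with nonempty interior) and let $Q_0 = \frac{1}{2}(Q - Q)$ be its central symmetrization. Then there exist $x, y \in \mathbb{R}^d$ such that $x + \frac{2}{d+1} Q_0 \subseteq Q \subseteq y + \frac{2d}{d+1} Q_0$. -/
open scoped Pointwise
open Finset Module

/-!
Let `n` be the dimension and `t = 1 / (n + 1)`. By Helly's theorem applied to the translates
`Q - t • (a - b)`, `a, b ∈ Q`, there is a point `x` with `x + t • (a - b) ∈ Q` for all
`a, b ∈ Q`: any `n + 1` of these translates meet, because `x + t • (aᵢ - bᵢ)` is then an average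
of `n + 1` points of `Q`. This is the inner inclusion. For the outer one, fix `q ∈ Q`: the
homothety `a ↦ x + t • (a - q)` of ratio `t < 1` maps the closed set `Q` into itself, so its
centre `x + (x - q) / n` lies in `Q`, and `q - x = (n / (n + 1)) • (q - (x + (x - q) / n))`.
-/

section

variable {E : Type*} [AddCommGroup E] [Module ℝ E]

theorem Convex.sub_div_smul_add_sum_inv_smul_mem {ι : Type*} {Q : Set E} (hQ : Convex ℝ Q)
    {s : Finset ι} {N : ℕ} (hs : #s ≤ N) {p : ι → E} (hp : ∀ i ∈ s, p i ∈ Q) {q : E}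
    (hq : q ∈ Q) : (1 - (#s : ℝ) / N) • q + ∑ i ∈ s, (N : ℝ)⁻¹ • p i ∈ Q := by
  have hsN : (#s : ℝ) / N ≤ 1 := div_le_one_of_le₀ (by exact_mod_cast hs) N.cast_nonneg
  have := hQ.sum_mem (t := insertNone s) (w := fun i => i.elim (1 - (#s : ℝ) / N) fun _ => N⁻¹)
    (z := fun i => i.elim q p) ?_ ?_ ?_
  · simpa [sum_insertNone] using this
  · simp only [mem_insertNone, Option.forall, Option.elim]
    exact ⟨fun _ => sub_nonneg.mpr hsN, fun _ _ => by positivity⟩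
  · rcases N.eq_zero_or_pos with rfl | hN
    · simp_all
    · simp only [sum_insertNone, Option.elim, sum_const, nsmul_eq_mul]
      field_simp
      ring
  · simp only [mem_insertNone, Option.forall, Option.elim]
    exact ⟨fun _ => hq, fun i hi => hp i (hi i rfl)⟩

theorem Convex.exists_forall_add_inv_smul_sub_mem_of_card_le {ι : Type*} {Q : Set E}
    (hQ : Convex ℝ Q) (hne : Q.Nonempty) {s : Finset ι} {N : ℕ} (hs : #s ≤ N) {a b : ι → E}
    (ha : ∀ i ∈ s, a i ∈ Q) (hb : ∀ i ∈ s, b i ∈ Q) :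
    ∃ x, ∀ i ∈ s, x + (N : ℝ)⁻¹ • (a i - b i) ∈ Q := by
  classical
  obtain ⟨q, hq⟩ := hne
  -- `x + N⁻¹ • (a i - b i)` is the average of `a i`, the `b j` for `j ≠ i`,
  -- and `N - #s` copies of `q`.
  refine ⟨(1 - (#s : ℝ) / N) • q + ∑ j ∈ s, (N : ℝ)⁻¹ • b j, fun i hi => ?_⟩
  have hupdate : ∑ j ∈ s, Function.update b i (a i) j = ∑ j ∈ s, b j + (a i - b i) := by
    rw [sum_update_of_mem hi, sum_eq_add_sum_sdiff_singleton_of_mem hi b]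
    abel
  have hp : ∀ j ∈ s, Function.update b i (a i) j ∈ Q := by
    intro j hj
    rcases eq_or_ne j i with rfl | hji
    · simpa using ha j hj
    · simpa [hji] using hb j hj
  convert hQ.sub_div_smul_add_sum_inv_smul_mem hs hp hq using 1
  rw [← smul_sum, ← smul_sum, hupdate, smul_add]
  abel

end

section

variable {E : Type*} [NormedAddCommGroup E] [NormedSpace ℝ E]

theorem IsClosed.mem_of_forall_add_smul_sub_mem {s : Set E} (hs : IsClosed s) (hne : s.Nonempty)
    {c : E} {r : ℝ} (hr : |r| < 1) (h : ∀ a ∈ s, c + r • (a - c) ∈ s) : c ∈ s := by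
  obtain ⟨a, ha⟩ := hne
  have hmem : ∀ n : ℕ, c + r ^ n • (a - c) ∈ s := by
    intro n
    induction n with
    | zero => simpa using ha
    | succ n ih => simpa only [add_sub_cancel_left, smul_smul, ← pow_succ'] using h _ ih
  have hlim : Filter.Tendsto (fun n : ℕ => c + r ^ n • (a - c)) Filter.atTop (nhds c) := by
    simpa using tendsto_const_nhds.add
      ((tendsto_pow_atTop_nhds_zero_of_abs_lt_one hr).smul_const (a - c))
  exact hs.mem_of_tendsto hlim (Filter.Eventually.of_forall hmem)

theorem IsCompact.exists_forall_add_inv_smul_sub_mem [FiniteDimensional ℝ E] {Q : Set E}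
    (hQc : IsCompact Q) (hQ : Convex ℝ Q) (hne : Q.Nonempty) :
    ∃ x, ∀ a ∈ Q, ∀ b ∈ Q, x + ((finrank ℝ E : ℝ) + 1)⁻¹ • (a - b) ∈ Q := by
  let F : Q × Q → Set E := fun p => (· + ((finrank ℝ E : ℝ) + 1)⁻¹ • (p.1 - p.2 : E)) ⁻¹' Q
  obtain ⟨x, hx⟩ := Convex.helly_theorem_compact' (𝕜 := ℝ) (F := F)
    (fun p => hQ.translate_preimage_left _)
    (fun p => (Homeomorph.addRight _).isCompact_preimage.mpr hQc)
    (fun I hI => by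
      obtain ⟨x, hx⟩ := hQ.exists_forall_add_inv_smul_sub_mem_of_card_le hne hI
        (a := fun p => p.1) (b := fun p => p.2) (fun p _ => p.1.2) (fun p _ => p.2.2)
      exact ⟨x, Set.mem_iInter₂.mpr fun p hp => by simpa [F] using hx p hp⟩)
  exact ⟨x, fun a ha b hb => Set.mem_iInter.mp hx (⟨a, ha⟩, ⟨b, hb⟩)⟩

theorem IsClosed.subset_vadd_div_smul_sub {Q : Set E} (hQ : IsClosed Q) {n : ℝ} (hn : 0 < n)
    {x : E} (hx : ∀ a ∈ Q, ∀ b ∈ Q, x + (n + 1)⁻¹ • (a - b) ∈ Q) :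
    Q ⊆ x +ᵥ (n / (n + 1)) • (Q - Q) := by
  intro q hq
  set z := x + n⁻¹ • (x - q)
  have hr : |(n + 1)⁻¹| < 1 := by
    rw [abs_of_pos (by positivity)]
    exact inv_lt_one_of_one_lt₀ (by linarith)
  have hz : z ∈ Q := hQ.mem_of_forall_add_smul_sub_mem ⟨q, hq⟩ hr fun a ha => by
    convert hx a ha q hq using 1
    match_scalars <;> field_simp <;> ring
  rw [Set.mem_vadd_set_iff_neg_vadd_mem, vadd_eq_add]
  convert Set.smul_mem_smul_set (a := n / (n + 1)) (Set.sub_mem_sub hq hz) using 1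
  match_scalars <;> field_simp
  ring

theorem IsCompact.exists_vadd_smul_sub_subset_and_subset_vadd_smul_sub [FiniteDimensional ℝ E]
    {Q : Set E} (hQc : IsCompact Q) (hQ : Convex ℝ Q) (hne : Q.Nonempty) :
    ∃ x : E, x +ᵥ ((finrank ℝ E : ℝ) + 1)⁻¹ • (Q - Q) ⊆ Q ∧
      Q ⊆ x +ᵥ ((finrank ℝ E : ℝ) / (finrank ℝ E + 1)) • (Q - Q) := by
  obtain ⟨x, hx⟩ := hQc.exists_forall_add_inv_smul_sub_mem hQ hne
  refine ⟨x, ?_, ?_⟩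
  · rintro _ ⟨_, ⟨_, ⟨a, ha, b, hb, rfl⟩, rfl⟩, rfl⟩
    exact hx a ha b hb
  · rcases (finrank ℝ E).eq_zero_or_pos with hE | hE
    · have : Subsingleton E := (finrank_eq_zero_iff_of_free ℝ E).mp hE
      obtain ⟨q, hq⟩ := hne
      intro p _
      rw [Subsingleton.elim p (x +ᵥ ((finrank ℝ E : ℝ) / (finrank ℝ E + 1)) • (q - q))]
      exact Set.vadd_mem_vadd_set (Set.smul_mem_smul_set (Set.sub_mem_sub hq hq))
    · exact hQc.isClosed.subset_vadd_div_smul_sub (by exact_mod_cast hE) hx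

end

/-- For any convex body `Q ⊆ ℝ^d` with central symmetrization `Q₀ = (1/2)(Q - Q)`,
there are `x, y` with `x + (2/(d+1)) Q₀ ⊆ Q ⊆ y + (2d/(d+1)) Q₀`. -/
theorem stmt_3 (d : ℕ) (Q : Set (EuclideanSpace ℝ (Fin d)))
    (hQc : IsCompact Q) (hQconv : Convex ℝ Q) (hQint : (interior Q).Nonempty) :
    ∃ x y : EuclideanSpace ℝ (Fin d),
      x +ᵥ (2 / ((d : ℝ) + 1)) • ((1 / 2 : ℝ) • (Q - Q)) ⊆ Q ∧
      Q ⊆ y +ᵥ (2 * (d : ℝ) / ((d : ℝ) + 1)) • ((1 / 2 : ℝ) • (Q - Q)) := by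
  obtain ⟨x, hinner, houter⟩ :=
    hQc.exists_vadd_smul_sub_subset_and_subset_vadd_smul_sub hQconv (hQint.mono interior_subset)
  rw [finrank_euclideanSpace_fin] at hinner houter
  refine ⟨x, x, ?_, ?_⟩ <;> rw [smul_smul]
  · convert hinner using 4
    field_simp
  · convert houter using 4
    field_simp
end

section
/- Let $Q$ be a convex body in $\mathbb{R}^d$ such that $Q \subseteq -dQ$. Then $Q \subseteq \frac{2d}{d+1} Q_0$ where $Q_0 = \frac{1}{2}(Q-Q)$, and $\frac{2}{d+1} Q_0 \subseteq Q$. -/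
open scoped Pointwise

/-! If `x = -t y` with `x, y ∈ Q`, then `x = (t/(t+1)) (x - y)`, giving the outer inclusion.
Conversely, for `q, q' ∈ Q` write `q' = -t p` with `p ∈ Q`; then
`(q - q')/(t+1) = q/(t+1) + t p/(t+1)` is a convex combination of points of `Q`. -/

section

variable {𝕜 E : Type*} [Field 𝕜] [AddCommGroup E] [Module 𝕜 E]

theorem Set.subset_smul_sub_self_of_subset_neg_smul {Q : Set E} {t : 𝕜} (ht : t + 1 ≠ 0)
    (hQ : Q ⊆ (-t) • Q) : Q ⊆ (t / (t + 1)) • (Q - Q) := by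
  intro x hx
  obtain ⟨y, hy, rfl⟩ := Set.mem_smul_set.mp (hQ hx)
  refine ⟨-t • y - y, Set.sub_mem_sub hx hy, ?_⟩
  show (t / (t + 1)) • (-t • y - y) = -t • y
  rw [show -t • y - y = (-(t + 1)) • y by module, smul_smul]
  congr 1
  field_simp

theorem Convex.inv_add_one_smul_sub_self_subset [LinearOrder 𝕜] [IsStrictOrderedRing 𝕜]
    {Q : Set E} (hQconv : Convex 𝕜 Q) {t : 𝕜} (ht : 0 ≤ t) (hQ : Q ⊆ (-t) • Q) : (t + 1)⁻¹ • (Q - Q) ⊆ Q := by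
  rintro _ ⟨_, ⟨q, hq, q', hq', rfl⟩, rfl⟩
  obtain ⟨p, hp, rfl⟩ := Set.mem_smul_set.mp (hQ hq')
  have ht1 : t + 1 ≠ 0 := by positivity
  have hcomb : (t + 1)⁻¹ • (q - -t • p) = (t + 1)⁻¹ • q + (t / (t + 1)) • p := by
    rw [div_eq_inv_mul]; module
  show (t + 1)⁻¹ • (q - -t • p) ∈ Q
  rw [hcomb]
  refine hQconv hq hp (by positivity) (by positivity) ?_
  field_simp
  ring

end

theorem stmt_4_general (d : ℕ) (Q : Set (EuclideanSpace ℝ (Fin d)))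
    (hQconv : Convex ℝ Q)
    (hQd : Q ⊆ (-(d : ℝ)) • Q) :
    Q ⊆ (2 * (d : ℝ) / ((d : ℝ) + 1)) • ((1 / 2 : ℝ) • (Q - Q)) ∧
      (2 / ((d : ℝ) + 1)) • ((1 / 2 : ℝ) • (Q - Q)) ⊆ Q := by
  have hd : (d : ℝ) + 1 ≠ 0 := by positivity
  rw [smul_smul, smul_smul]
  constructor
  · convert Set.subset_smul_sub_self_of_subset_neg_smul hd hQd using 2
    ring
  · convert hQconv.inv_add_one_smul_sub_self_subset d.cast_nonneg hQd using 2
    field_simp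

/-- If a convex body `Q ⊆ ℝ^d` satisfies `Q ⊆ -d Q`, then
`Q ⊆ (2d/(d+1)) Q₀` and `(2/(d+1)) Q₀ ⊆ Q`, where `Q₀ = (1/2)(Q - Q)`. -/
theorem stmt_4 (d : ℕ) (Q : Set (EuclideanSpace ℝ (Fin d)))
    (hQc : IsCompact Q) (hQconv : Convex ℝ Q) (hQint : (interior Q).Nonempty)
    (hQd : Q ⊆ (-(d : ℝ)) • Q) :
    Q ⊆ (2 * (d : ℝ) / ((d : ℝ) + 1)) • ((1 / 2 : ℝ) • (Q - Q)) ∧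
      (2 / ((d : ℝ) + 1)) • ((1 / 2 : ℝ) • (Q - Q)) ⊆ Q :=
  stmt_4_general d Q hQconv hQd
end

section
/- Let $K$ be a convex body in $\mathbb{R}^d$, $d \ge 2$, and let $\mathcal{K} = \{x_i + \tau_i K : i = 1,\dots,n\}$ with $\tau_i > 0$ be a non-separable family, i.e., every hyperplane intersecting $\mathrm{conv}\left(\bigcup \mathcal{K}\right)$ intersects some member of $\mathcal{K}$. Then for every unit vector $u \in S^{d-1}$, $\mathrm{width}_u\left(\mathrm{conv} \bigcup \mathcal{K}\right) \le \left(\sum_{i=1}^n \tau_i\right) \mathrm{width}_u(K)$. -/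
open scoped Pointwise RealInnerProductSpace
open Set MeasureTheory

/-!
Project everything onto the line spanned by `u`. The convex hull of the union projects onto an
interval `[A, B]`, and the homothet `x i + τ i K` projects into an interval of length
`τ i · width_u K`. A hyperplane `⟪u, ·⟫ = r` with `r ∈ [A, B]` meets the convex hull, so by
non-separability it meets some homothet: these intervals cover `[A, B]`, and comparing Lebesgue
measures gives `B - A ≤ ∑ τ i · width_u K`.
-/

theorem sub_le_sum_of_Icc_subset_iUnion_Icc {ι : Type*} [Fintype ι] {A B : ℝ} {a b : ι → ℝ}
    (hab : ∀ i, a i ≤ b i) (h : Icc A B ⊆ ⋃ i, Icc (a i) (b i)) :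
    B - A ≤ ∑ i, (b i - a i) := by
  have hvol : volume (Icc A B) ≤ ∑ i, volume (Icc (a i) (b i)) :=
    (measure_mono h).trans (measure_iUnion_fintype_le _ _)
  simp only [Real.volume_Icc] at hvol
  rwa [← ENNReal.ofReal_sum_of_nonneg (fun i _ => sub_nonneg.2 (hab i)),
    ENNReal.ofReal_le_ofReal_iff (Finset.sum_nonneg fun i _ => sub_nonneg.2 (hab i))] at hvol

theorem IsCompact.convexHull_eq_Icc {U : Set ℝ} (hU : IsCompact U) (hne : U.Nonempty) :
    convexHull ℝ U = Icc (sInf U) (sSup U) := by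
  refine (convexHull_min (fun r hr => ?_) (convex_Icc _ _)).antisymm ?_
  · exact ⟨csInf_le hU.bddBelow hr, le_csSup hU.bddAbove hr⟩
  · exact (convex_convexHull ℝ U).ordConnected.out (subset_convexHull ℝ U (hU.sInf_mem hne))
      (subset_convexHull ℝ U (hU.sSup_mem hne))

theorem sSup_sub_sInf_convexHull_le_sum {ι : Type*} [Fintype ι] {U : Set ℝ}
    (hU : IsCompact U) {a b : ι → ℝ} (hab : ∀ i, a i ≤ b i)
    (hcover : convexHull ℝ U ⊆ ⋃ i, Icc (a i) (b i)) :
    sSup (convexHull ℝ U) - sInf (convexHull ℝ U) ≤ ∑ i, (b i - a i) := by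
  rcases U.eq_empty_or_nonempty with rfl | hne
  · simpa using Finset.sum_nonneg fun i _ => sub_nonneg.2 (hab i)
  rw [hU.convexHull_eq_Icc hne] at hcover ⊢
  have hle : sInf U ≤ sSup U := csInf_le_csSup hne hU.bddBelow hU.bddAbove
  rw [csSup_Icc hle, csInf_Icc hle]
  exact sub_le_sum_of_Icc_subset_iUnion_Icc hab hcover

theorem LinearMap.image_vadd_smul_subset_Icc {E : Type*} [AddCommGroup E] [Module ℝ E]
    (φ : E →ₗ[ℝ] ℝ) {K : Set E} (hbelow : BddBelow (φ '' K)) (habove : BddAbove (φ '' K))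
    (x : E) {t : ℝ} (ht : 0 ≤ t) :
    φ '' (x +ᵥ t • K) ⊆ Icc (φ x + t * sInf (φ '' K)) (φ x + t * sSup (φ '' K)) := by
  rintro _ ⟨_, ⟨_, ⟨k, hk, rfl⟩, rfl⟩, rfl⟩
  have hφk : φ (x +ᵥ t • k) = φ x + t * φ k := by simp
  rw [hφk]
  exact ⟨by gcongr; exact csInf_le hbelow (mem_image_of_mem φ hk),
    by gcongr; exact le_csSup habove (mem_image_of_mem φ hk)⟩

theorem stmt_5_general (d n : ℕ)
    (K : Set (EuclideanSpace ℝ (Fin d)))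
    (hKc : IsCompact K)
    (x : Fin n → EuclideanSpace ℝ (Fin d)) (τ : Fin n → ℝ) (hτ : ∀ i, 0 < τ i)
    (hNS : ∀ (u : EuclideanSpace ℝ (Fin d)) (c : ℝ), u ≠ 0 →
      ({y | ⟪u, y⟫ = c} ∩ convexHull ℝ (⋃ i, x i +ᵥ τ i • K)).Nonempty →
      ∃ i, ({y | ⟪u, y⟫ = c} ∩ (x i +ᵥ τ i • K)).Nonempty)
    (u : EuclideanSpace ℝ (Fin d)) (hu : ‖u‖ = 1) :
    sSup ((fun y => ⟪u, y⟫) '' convexHull ℝ (⋃ i, x i +ᵥ τ i • K)) -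
        sInf ((fun y => ⟪u, y⟫) '' convexHull ℝ (⋃ i, x i +ᵥ τ i • K)) ≤
      (∑ i, τ i) * (sSup ((fun y => ⟪u, y⟫) '' K) - sInf ((fun y => ⟪u, y⟫) '' K)) := by
  set φ : EuclideanSpace ℝ (Fin d) →ₗ[ℝ] ℝ := innerₛₗ ℝ u
  change sSup (φ '' _) - sInf (φ '' _) ≤ (∑ i, τ i) * (sSup (φ '' K) - sInf (φ '' K))
  have hφK : IsCompact (φ '' K) := hKc.image φ.continuous_of_finiteDimensional
  have hS : IsCompact (⋃ i, x i +ᵥ τ i • K) :=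
    isCompact_iUnion fun i => (hKc.smul (τ i)).vadd (x i)
  have hcover : convexHull ℝ (φ '' ⋃ i, x i +ᵥ τ i • K) ⊆
      ⋃ i, Icc (φ (x i) + τ i * sInf (φ '' K)) (φ (x i) + τ i * sSup (φ '' K)) := by
    rw [← φ.image_convexHull]
    rintro _ ⟨y, hy, rfl⟩
    obtain ⟨i, z, hz, hzK⟩ := hNS u (φ y) (by rintro rfl; simp at hu) ⟨y, rfl, hy⟩
    exact mem_iUnion_of_mem i <| φ.image_vadd_smul_subset_Icc hφK.bddBelow
      hφK.bddAbove (x i) (hτ i).le ⟨z, hzK, hz⟩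
  rw [φ.image_convexHull]
  have hle : sInf (φ '' K) ≤ sSup (φ '' K) := Real.sInf_le_sSup _ hφK.bddBelow hφK.bddAbove
  calc _ ≤ ∑ i, (φ (x i) + τ i * sSup (φ '' K) - (φ (x i) + τ i * sInf (φ '' K))) :=
        sSup_sub_sInf_convexHull_le_sum (hS.image φ.continuous_of_finiteDimensional)
          (fun i => add_le_add_right (mul_le_mul_of_nonneg_left hle (hτ i).le) _) hcover
    _ = _ := by simp only [add_sub_add_left_eq_sub, ← mul_sub, Finset.sum_mul]

/-- Width lemma: if `𝒦 = {x i + τ i • K}` is a non-separable family of positive homothets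
of a convex body `K ⊆ ℝ^d`, then for every unit vector `u`,
`width_u (conv ⋃ 𝒦) ≤ (∑ τ i) · width_u K`. -/
theorem stmt_5 (d n : ℕ) (hd : 2 ≤ d) (hn : 1 ≤ n)
    (K : Set (EuclideanSpace ℝ (Fin d)))
    (hKc : IsCompact K) (hKconv : Convex ℝ K) (hKint : (interior K).Nonempty)
    (x : Fin n → EuclideanSpace ℝ (Fin d)) (τ : Fin n → ℝ) (hτ : ∀ i, 0 < τ i)
    (hNS : ∀ (u : EuclideanSpace ℝ (Fin d)) (c : ℝ), u ≠ 0 →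
      ({y | ⟪u, y⟫ = c} ∩ convexHull ℝ (⋃ i, x i +ᵥ τ i • K)).Nonempty →
      ∃ i, ({y | ⟪u, y⟫ = c} ∩ (x i +ᵥ τ i • K)).Nonempty)
    (u : EuclideanSpace ℝ (Fin d)) (hu : ‖u‖ = 1) :
    sSup ((fun y => ⟪u, y⟫) '' convexHull ℝ (⋃ i, x i +ᵥ τ i • K)) -
        sInf ((fun y => ⟪u, y⟫) '' convexHull ℝ (⋃ i, x i +ᵥ τ i • K)) ≤
      (∑ i, τ i) * (sSup ((fun y => ⟪u, y⟫) '' K) - sInf ((fun y => ⟪u, y⟫) '' K)) :=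
  stmt_5_general d n K hKc x τ hτ hNS u hu
end

section
/- Let $K$ be a convex body in $\mathbb{R}^d$, $d \ge 2$, and let $\mathcal{K} = \{x_i + \tau_i K : i=1,\dots,n\}$ with $\tau_i > 0$ be a non-separable family. Then there exists $z \in \mathbb{R}^d$ such that $\bigcup \mathcal{K} \subseteq z + d\left(\sum_{i=1}^n \tau_i\right) K$. -/
/-!
Project every member of the family onto a line. Non-separability says that the projections of the
`x i +ᵥ τ i • K` cover the projection of their union, so the union is at most `∑ τ i` times as wide
as `K` in every direction; by Hahn–Banach, `A - A ⊆ (∑ τ i) • (K - K)` for the union `A`.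
Helly's theorem gives a point `s` with `K - K ⊆ (d + 1) • (K - s)` (Minkowski), and a second
application of Helly, to the translates `p - d (∑ τ i) (K - s)`, `p ∈ A`, finds a common point `z`:
for `d + 1` points of `A` their centroid works, because each of them differs from it by the average
of `d` differences in `A - A`.
-/

open scoped Pointwise RealInnerProductSpace
open Module Set MeasureTheory

theorem Convex.sum_mem_card_smul {E ι : Type*} [AddCommGroup E] [Module ℝ E] {S : Set E}
    (hS : Convex ℝ S) (hne : S.Nonempty) (t : Finset ι) {f : ι → E} (hf : ∀ i ∈ t, f i ∈ S) :
    ∑ i ∈ t, f i ∈ (t.card : ℝ) • S := by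
  classical
  induction t using Finset.induction_on with
  | empty => simp [zero_smul_set hne]
  | insert a t ha ih =>
    rw [Finset.sum_insert ha, Finset.card_insert_of_notMem ha, Nat.cast_succ, add_comm (_ : ℝ),
      hS.add_smul zero_le_one (Nat.cast_nonneg _), one_smul]
    exact add_mem_add (hf a (Finset.mem_insert_self a t))
      (ih fun i hi => hf i (Finset.mem_insert_of_mem hi))

theorem Convex.sum_erase_mem_smul {E : Type*} [AddCommGroup E] [Module ℝ E] {S : Set E}
    (hS : Convex ℝ S) (hne : S.Nonempty) {m : ℕ} {y : Fin (m + 1) → E} (hy : ∀ k, y k ∈ S)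
    (j : Fin (m + 1)) : ∑ k ∈ Finset.univ.erase j, y k ∈ (m : ℝ) • S := by
  simpa using hS.sum_mem_card_smul hne (Finset.univ.erase j) fun k _ => hy k

theorem sub_le_sum_of_Icc_subset_iUnion {ι : Type*} [Fintype ι] {a b : ℝ} {lo hi : ι → ℝ}
    (hlohi : ∀ i, lo i ≤ hi i) (h : Icc a b ⊆ ⋃ i, Icc (lo i) (hi i)) :
    b - a ≤ ∑ i, (hi i - lo i) := by
  have hvol : ENNReal.ofReal (b - a) ≤ ENNReal.ofReal (∑ i, (hi i - lo i)) := by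
    calc ENNReal.ofReal (b - a) = volume (Icc a b) := Real.volume_Icc.symm
      _ ≤ volume (⋃ i, Icc (lo i) (hi i)) := measure_mono h
      _ ≤ ∑ i, volume (Icc (lo i) (hi i)) := measure_iUnion_fintype_le _ _
      _ = ENNReal.ofReal (∑ i, (hi i - lo i)) := by
        simp only [Real.volume_Icc]
        rw [ENNReal.ofReal_sum_of_nonneg fun i _ => sub_nonneg.2 (hlohi i)]
  exact (ENNReal.ofReal_le_ofReal_iff (Finset.sum_nonneg fun i _ => sub_nonneg.2 (hlohi i))).1 hvol

theorem mem_of_forall_exists_inner_le {E : Type*} [NormedAddCommGroup E] [InnerProductSpace ℝ E]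
    [CompleteSpace E] {S : Set E} (hconv : Convex ℝ S) (hclosed : IsClosed S) {v : E}
    (h : ∀ u : E, ∃ w ∈ S, ⟪u, v⟫ ≤ ⟪u, w⟫) : v ∈ S := by
  rw [← iInter_halfSpaces_eq hconv hclosed, mem_iInter]
  intro l
  simpa [InnerProductSpace.toDual_symm_apply] using h ((InnerProductSpace.toDual ℝ E).symm l)

section NonSeparable

variable {E : Type*} [NormedAddCommGroup E] [InnerProductSpace ℝ E]

def IsNonSeparable {ι : Type*} (B : ι → Set E) : Prop :=
  ∀ (u : E) (c : ℝ), u ≠ 0 → ({y | ⟪u, y⟫ = c} ∩ convexHull ℝ (⋃ i, B i)).Nonempty →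
    ∃ i, ({y | ⟪u, y⟫ = c} ∩ B i).Nonempty

theorem IsNonSeparable.inner_sub_le {ι : Type*} [Fintype ι] {B : ι → Set E}
    (hB : IsNonSeparable B) {u : E} {lo hi : ι → ℝ} (hlohi : ∀ i, lo i ≤ hi i)
    (hbounds : ∀ i, ∀ b ∈ B i, ⟪u, b⟫ ∈ Icc (lo i) (hi i)) {p q : E}
    (hp : p ∈ ⋃ i, B i) (hq : q ∈ ⋃ i, B i) :
    ⟪u, p⟫ - ⟪u, q⟫ ≤ ∑ i, (hi i - lo i) := by
  rcases eq_or_ne u 0 with rfl | hu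
  · simpa using Finset.sum_nonneg fun i _ => sub_nonneg.2 (hlohi i)
  refine sub_le_sum_of_Icc_subset_iUnion hlohi fun c hc => ?_
  have hseg : c ∈ innerₛₗ ℝ u '' segment ℝ q p := by
    rw [← (innerₛₗ ℝ u).coe_toAffineMap, image_segment, LinearMap.coe_toAffineMap,
      innerₛₗ_apply_apply, innerₛₗ_apply_apply, segment_eq_Icc (hc.1.trans hc.2)]
    exact hc
  obtain ⟨y, hy, hyc⟩ := hseg
  obtain ⟨i, w, hwc, hw⟩ := hB u c hu ⟨y, hyc, segment_subset_convexHull hq hp hy⟩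
  exact mem_iUnion.2 ⟨i, hwc ▸ hbounds i w hw⟩

theorem IsNonSeparable.sub_mem_smul_sub [CompleteSpace E] {ι : Type*} [Fintype ι] {K : Set E}
    (hKc : IsCompact K) (hKconv : Convex ℝ K) {x : ι → E} {τ : ι → ℝ} (hτ : ∀ i, 0 ≤ τ i)
    (hNS : IsNonSeparable fun i => x i +ᵥ τ i • K) {p q : E}
    (hp : p ∈ ⋃ i, x i +ᵥ τ i • K) (hq : q ∈ ⋃ i, x i +ᵥ τ i • K) :
    p - q ∈ (∑ i, τ i) • (K - K) := by
  have hKne : K.Nonempty := by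
    obtain ⟨i, hi⟩ := mem_iUnion.1 hp
    exact smul_set_nonempty.1 (vadd_set_nonempty.1 ⟨p, hi⟩)
  have hKKc : IsCompact (K - K) := sub_eq_add_neg K K ▸ hKc.add hKc.neg
  refine mem_of_forall_exists_inner_le ((hKconv.sub hKconv).smul _) (hKKc.smul _).isClosed
    fun u => ?_
  have hcont : ContinuousOn (fun y => ⟪u, y⟫) K := by fun_prop
  obtain ⟨k₁, hk₁, hmax⟩ := hKc.exists_isMaxOn hKne hcont
  obtain ⟨k₂, hk₂, hmin⟩ := hKc.exists_isMinOn hKne hcont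
  refine ⟨(∑ i, τ i) • (k₁ - k₂), smul_mem_smul_set (sub_mem_sub hk₁ hk₂), ?_⟩
  have hwidth := hNS.inner_sub_le (u := u) (lo := fun i => ⟪u, x i⟫ + τ i * ⟪u, k₂⟫)
    (hi := fun i => ⟪u, x i⟫ + τ i * ⟪u, k₁⟫)
    (fun i => by gcongr; exacts [hτ i, hmax hk₂])
    (fun i b hb => by
      obtain ⟨_, ⟨k, hk, rfl⟩, rfl⟩ := hb
      simp only [vadd_eq_add, inner_add_right, real_inner_smul_right, mem_Icc]
      exact ⟨by gcongr; exacts [hτ i, hmin hk], by gcongr; exacts [hτ i, hmax hk]⟩)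
    hp hq
  calc ⟪u, p - q⟫ = ⟪u, p⟫ - ⟪u, q⟫ := inner_sub_right _ _ _
    _ ≤ ∑ i, τ i * (⟪u, k₁⟫ - ⟪u, k₂⟫) := by simpa [mul_sub] using hwidth
    _ = ⟪u, (∑ i, τ i) • (k₁ - k₂)⟫ := by
      rw [real_inner_smul_right, inner_sub_right, Finset.sum_mul]

end NonSeparable

section Helly

variable {E : Type*} [NormedAddCommGroup E] [NormedSpace ℝ E] [FiniteDimensional ℝ E]

theorem Convex.helly_theorem_compact_fin {ι : Type*} {F : ι → Set E}
    (h_convex : ∀ i, Convex ℝ (F i)) (h_compact : ∀ i, IsCompact (F i))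
    (h_inter : ∀ y : Fin (finrank ℝ E + 1) → ι, (⋂ j, F (y j)).Nonempty) :
    (⋂ i, F i).Nonempty := by
  refine Convex.helly_theorem_compact' h_convex h_compact fun I hI => ?_
  rcases I.eq_empty_or_nonempty with rfl | ⟨i₀, hi₀⟩
  · simp
  have : Nonempty I := ⟨⟨i₀, hi₀⟩⟩
  obtain ⟨e⟩ : Nonempty (I ↪ Fin (finrank ℝ E + 1)) :=
    Function.Embedding.nonempty_of_card_le (by simpa using hI)
  obtain ⟨z, hz⟩ := h_inter fun j => ((Function.invFun e j : I) : ι)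
  refine ⟨z, mem_iInter₂.2 fun i hi => ?_⟩
  simpa [Function.leftInverse_invFun e.injective ⟨i, hi⟩] using mem_iInter.1 hz (e ⟨i, hi⟩)

theorem Convex.exists_sub_subset_smul_neg_vadd {K : Set E} (hKc : IsCompact K)
    (hKconv : Convex ℝ K) : ∃ s : E, K - K ⊆ ((finrank ℝ E : ℝ) + 1) • (-s +ᵥ K) := by
  set d : ℝ := (finrank ℝ E : ℝ)
  have hd : 0 < d + 1 := by positivity
  have hcenter : (⋂ k : K, (d + 1)⁻¹ • ((k : E) +ᵥ d • K)).Nonempty := by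
    refine Convex.helly_theorem_compact_fin (fun k => ((hKconv.smul _).vadd _).smul _)
      (fun k => ((hKc.smul _).vadd _).smul _) fun y => ⟨(d + 1)⁻¹ • ∑ j, (y j : E), ?_⟩
    refine mem_iInter.2 fun j => smul_mem_smul_set ?_
    rw [← Finset.add_sum_erase _ _ (Finset.mem_univ j)]
    exact vadd_mem_vadd_set (hKconv.sum_erase_mem_smul ⟨_, (y j).2⟩ (fun k => (y k).2) j)
  obtain ⟨s, hs⟩ := hcenter
  refine ⟨s, ?_⟩
  rintro _ ⟨k₁, hk₁, k₂, hk₂, rfl⟩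
  obtain ⟨_, ⟨_, ⟨k', hk', rfl⟩, rfl⟩, rfl⟩ := mem_iInter.1 hs ⟨k₂, hk₂⟩
  have hmid : (d + 1)⁻¹ • (k₁ + d • k') ∈ K := by
    convert hKconv hk₁ hk' (a := (d + 1)⁻¹) (b := (d + 1)⁻¹ * d) (by positivity) (by positivity)
      (by field_simp; ring) using 1
    simp only [smul_add, smul_smul]
  refine ⟨-((d + 1)⁻¹ • (k₂ +ᵥ d • k')) +ᵥ (d + 1)⁻¹ • (k₁ + d • k'),
    vadd_mem_vadd_set hmid, ?_⟩
  simp only [vadd_eq_add, smul_add, smul_neg, smul_smul, mul_inv_cancel₀ hd.ne', one_smul]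
  abel

theorem exists_subset_vadd_smul_of_sub_mem_smul {A C : Set E} (hCc : IsCompact C)
    (hCconv : Convex ℝ C) (hA : ∀ p ∈ A, ∀ q ∈ A, p - q ∈ ((finrank ℝ E : ℝ) + 1) • C) :
    ∃ z : E, A ⊆ z +ᵥ (finrank ℝ E : ℝ) • C := by
  set d : ℝ := (finrank ℝ E : ℝ)
  have hd : 0 < d + 1 := by positivity
  have hcover : (⋂ p : A, (p : E) +ᵥ -(d • C)).Nonempty := by
    refine Convex.helly_theorem_compact_fin (fun p => (hCconv.smul _).neg.vadd _)
      (fun p => (hCc.smul _).neg.vadd _) fun y => ⟨(d + 1)⁻¹ • ∑ j, (y j : E), ?_⟩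
    refine mem_iInter.2 fun j => ?_
    rw [mem_vadd_set_iff_neg_vadd_mem, vadd_eq_add, Set.mem_neg, neg_add, neg_neg,
      ← sub_eq_add_neg]
    have hsum := (hCconv.smul (d + 1)).sum_erase_mem_smul ⟨_, hA _ (y j).2 _ (y j).2⟩
      (fun k => hA _ (y j).2 _ (y k).2) j
    rw [Finset.sum_erase _ (sub_self _)] at hsum
    have hinv := smul_mem_smul_set (a := (d + 1)⁻¹) hsum
    rw [smul_smul, smul_smul] at hinv
    convert hinv using 2
    · change d = (d + 1)⁻¹ * d * (d + 1)
      field_simp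
    · rw [Finset.sum_sub_distrib, Finset.sum_const, Finset.card_univ, Fintype.card_fin, smul_sub,
        ← Nat.cast_smul_eq_nsmul ℝ, smul_smul, Nat.cast_succ, inv_mul_cancel₀ hd.ne', one_smul]
  obtain ⟨z, hz⟩ := hcover
  refine ⟨z, fun p hp => ?_⟩
  have hzp := mem_iInter.1 hz ⟨p, hp⟩
  rw [mem_vadd_set_iff_neg_vadd_mem, Set.mem_neg] at hzp
  rw [mem_vadd_set_iff_neg_vadd_mem]
  simpa [neg_add_eq_sub] using hzp

end Helly

theorem IsNonSeparable.exists_iUnion_subset_vadd_smul {E ι : Type*} [NormedAddCommGroup E]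
    [InnerProductSpace ℝ E] [FiniteDimensional ℝ E] [Fintype ι] {K : Set E}
    (hKc : IsCompact K) (hKconv : Convex ℝ K) {x : ι → E} {τ : ι → ℝ} (hτ : ∀ i, 0 ≤ τ i)
    (hNS : IsNonSeparable fun i => x i +ᵥ τ i • K) :
    ∃ z : E, (⋃ i, x i +ᵥ τ i • K) ⊆ z +ᵥ ((finrank ℝ E : ℝ) * ∑ i, τ i) • K := by
  obtain ⟨s, hs⟩ := hKconv.exists_sub_subset_smul_neg_vadd hKc
  obtain ⟨z, hz⟩ := exists_subset_vadd_smul_of_sub_mem_smul (A := ⋃ i, x i +ᵥ τ i • K)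
    ((hKc.vadd (-s)).smul (∑ i, τ i)) ((hKconv.vadd (-s)).smul (∑ i, τ i))
    fun p hp q hq => by
      rw [smul_comm]
      exact smul_set_mono hs (hNS.sub_mem_smul_sub hKc hKconv hτ hp hq)
  refine ⟨z + ((finrank ℝ E : ℝ) * ∑ i, τ i) • -s, fun p hp => ?_⟩
  obtain ⟨_, ⟨_, ⟨_, ⟨k, hk, rfl⟩, rfl⟩, rfl⟩, rfl⟩ := hz hp
  refine ⟨((finrank ℝ E : ℝ) * ∑ i, τ i) • k, smul_mem_smul_set hk, ?_⟩
  simp only [vadd_eq_add, smul_add, smul_smul]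
  abel

theorem stmt_6_general (d n : ℕ)
    (K : Set (EuclideanSpace ℝ (Fin d)))
    (hKc : IsCompact K) (hKconv : Convex ℝ K)
    (x : Fin n → EuclideanSpace ℝ (Fin d)) (τ : Fin n → ℝ) (hτ : ∀ i, 0 < τ i)
    (hNS : ∀ (u : EuclideanSpace ℝ (Fin d)) (c : ℝ), u ≠ 0 →
      ({y | ⟪u, y⟫ = c} ∩ convexHull ℝ (⋃ i, x i +ᵥ τ i • K)).Nonempty →
      ∃ i, ({y | ⟪u, y⟫ = c} ∩ (x i +ᵥ τ i • K)).Nonempty) :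
    ∃ z : EuclideanSpace ℝ (Fin d),
      (⋃ i, x i +ᵥ τ i • K) ⊆ z +ᵥ ((d : ℝ) * ∑ i, τ i) • K := by
  simpa only [finrank_euclideanSpace_fin] using
    IsNonSeparable.exists_iUnion_subset_vadd_smul hKc hKconv (fun i => (hτ i).le) hNS

/-- Any non-separable family `{x i + τ i • K}` of positive homothets of a convex body
`K ⊆ ℝ^d` is covered by a translate of `d (∑ τ i) • K`. -/
theorem stmt_6 (d n : ℕ) (hd : 2 ≤ d) (hn : 1 ≤ n)
    (K : Set (EuclideanSpace ℝ (Fin d)))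
    (hKc : IsCompact K) (hKconv : Convex ℝ K) (hKint : (interior K).Nonempty)
    (x : Fin n → EuclideanSpace ℝ (Fin d)) (τ : Fin n → ℝ) (hτ : ∀ i, 0 < τ i)
    (hNS : ∀ (u : EuclideanSpace ℝ (Fin d)) (c : ℝ), u ≠ 0 →
      ({y | ⟪u, y⟫ = c} ∩ convexHull ℝ (⋃ i, x i +ᵥ τ i • K)).Nonempty →
      ∃ i, ({y | ⟪u, y⟫ = c} ∩ (x i +ᵥ τ i • K)).Nonempty) :
    ∃ z : EuclideanSpace ℝ (Fin d),
      (⋃ i, x i +ᵥ τ i • K) ⊆ z +ᵥ ((d : ℝ) * ∑ i, τ i) • K :=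
  stmt_6_general d n K hKc hKconv x τ hτ hNS
end

section
/- Let $K_0$ be an $o$-symmetric convex body in $\mathbb{R}^d$, $d \ge 2$, and let $\mathcal{K} = \{x_i + \tau_i K_0 : i=1,\dots,n\}$ with $\tau_i > 0$ be a non-separable family. Set $x = \left(\sum_{i=1}^n \tau_i x_i\right)/\left(\sum_{i=1}^n \tau_i\right)$. Then $\bigcup \mathcal{K} \subseteq x + \left(\sum_{i=1}^n \tau_i\right) K_0$. -/
/-!
Separate a point `p` of the union from the convex body `x̄ + T • K₀` (`T = ∑ τ i`) by a
direction `v`, and let `h = max_{K₀} ⟪v, ·⟫`. By symmetry the members project to the intervals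
`[aᵢ - τᵢ h, bᵢ]` with `aᵢ = ⟪v, xᵢ⟫`, `bᵢ = aᵢ + τᵢ h`, and non-separability says that their union
is an interval. So `(bᵢ, ⟪v, p⟫]` is covered by the intervals with `bⱼ > bᵢ`, whence
`⟪v, p⟫ - bᵢ ≤ 2h ∑_{bⱼ > bᵢ} τⱼ`. Summing with weights `τᵢ` counts each pair `{i, j}` at most once
and gives `T ⟪v, p⟫ ≤ ∑ τᵢ aᵢ + h T²`, i.e. `p` does not lie beyond the supporting hyperplane of
the target in direction `v`.
-/

open scoped Pointwise RealInnerProductSpace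
open Finset

theorem sub_le_sum_sub_of_Ioc_subset_biUnion_Icc {ι : Type*} (s : Finset ι) {lo hi : ι → ℝ}
    (hlohi : ∀ j ∈ s, lo j ≤ hi j) {a b : ℝ}
    (hsub : Set.Ioc a b ⊆ ⋃ j ∈ s, Set.Icc (lo j) (hi j)) :
    b - a ≤ ∑ j ∈ s, (hi j - lo j) := by
  open MeasureTheory in
  have hvol : ENNReal.ofReal (b - a) ≤ ENNReal.ofReal (∑ j ∈ s, (hi j - lo j)) := calc
    ENNReal.ofReal (b - a) = volume (Set.Ioc a b) := Real.volume_Ioc.symm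
    _ ≤ volume (⋃ j ∈ s, Set.Icc (lo j) (hi j)) := measure_mono hsub
    _ ≤ ∑ j ∈ s, volume (Set.Icc (lo j) (hi j)) := measure_biUnion_finset_le _ _
    _ = ENNReal.ofReal (∑ j ∈ s, (hi j - lo j)) := by
      simp only [Real.volume_Icc]
      rw [ENNReal.ofReal_sum_of_nonneg fun j hj => sub_nonneg.2 (hlohi j hj)]
  exact (ENNReal.ofReal_le_ofReal_iff (sum_nonneg fun j hj => sub_nonneg.2 (hlohi j hj))).1 hvol

theorem two_mul_sum_mul_sum_filter_lt_le {ι α : Type*} [Fintype ι] [LinearOrder α]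
    {w : ι → ℝ} (hw : ∀ i, 0 ≤ w i) (b : ι → α) :
    2 * ∑ i, w i * ∑ j with b i < b j, w j ≤ (∑ i, w i) ^ 2 - ∑ i, w i ^ 2 := by
  classical
  have hswap : ∑ i, w i * ∑ j with b i < b j, w j = ∑ i, w i * ∑ j with b j < b i, w j := by
    simp only [mul_sum, sum_filter]
    rw [sum_comm]
    exact sum_congr rfl fun i _ => sum_congr rfl fun j _ => by split_ifs <;> ring
  have hsplit : ∀ i, ∑ j with b i < b j, w j + ∑ j with b j < b i, w j ≤ ∑ j, w j - w i := by
    intro i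
    rw [← sum_union (disjoint_filter.2 fun j _ h h' => lt_asymm h h'),
      ← sum_erase_eq_sub (mem_univ i)]
    refine sum_le_sum_of_subset_of_nonneg (fun j hj => ?_) fun j _ _ => hw j
    simp only [mem_union, mem_filter, mem_univ, true_and] at hj
    exact mem_erase.2 ⟨by rintro rfl; simp at hj, mem_univ j⟩
  calc 2 * ∑ i, w i * ∑ j with b i < b j, w j
      = ∑ i, w i * (∑ j with b i < b j, w j + ∑ j with b j < b i, w j) := by
        rw [two_mul]; nth_rw 2 [hswap]; rw [← sum_add_distrib]; simp only [mul_add]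
    _ ≤ ∑ i, w i * (∑ j, w j - w i) :=
        sum_le_sum fun i _ => mul_le_mul_of_nonneg_left (hsplit i) (hw i)
    _ = (∑ i, w i) ^ 2 - ∑ i, w i ^ 2 := by
        simp only [mul_sub, sum_sub_distrib, ← sum_mul, sq]

theorem mul_le_sum_mul_add_of_ordConnected {ι : Type*} [Fintype ι] {w a : ι → ℝ}
    (hw : ∀ i, 0 ≤ w i) {h : ℝ} (hh : 0 ≤ h) {J : ι → Set ℝ}
    (hJ : ∀ i, J i ⊆ Set.Icc (a i - w i * h) (a i + w i * h))
    (htop : ∀ i, a i + w i * h ∈ J i) (hconn : (⋃ i, J i).OrdConnected)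
    {P : ℝ} (hP : P ∈ ⋃ i, J i) :
    (∑ i, w i) * P ≤ ∑ i, w i * a i + h * (∑ i, w i) ^ 2 := by
  classical
  set b : ι → ℝ := fun i => a i + w i * h
  have hgap : ∀ i, P - b i ≤ ∑ j with b i < b j, 2 * h * w j := by
    intro i
    have hcover : Set.Ioc (b i) P ⊆ ⋃ j ∈ ({j | b i < b j} : Finset ι),
        Set.Icc (a j - w j * h) (b j) := by
      intro c hc
      obtain ⟨j, hj⟩ := Set.mem_iUnion.1 <|
        hconn.out (Set.mem_iUnion.2 ⟨i, htop i⟩) hP (Set.Ioc_subset_Icc_self hc)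
      have hcj := hJ j hj
      exact Set.mem_biUnion (mem_filter.2 ⟨mem_univ j, hc.1.trans_le hcj.2⟩) hcj
    refine (sub_le_sum_sub_of_Ioc_subset_biUnion_Icc _ (fun j _ => ?_) hcover).trans_eq
      (sum_congr rfl fun j _ => by ring)
    have := mul_nonneg (hw j) hh
    linarith
  calc (∑ i, w i) * P = ∑ i, w i * (P - b i) + ∑ i, w i * b i := by
        rw [sum_mul, ← sum_add_distrib]; exact sum_congr rfl fun i _ => by ring
    _ ≤ ∑ i, w i * ∑ j with b i < b j, 2 * h * w j + ∑ i, w i * b i := by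
        gcongr with i; exact hw i; exact hgap i
    _ = h * (2 * ∑ i, w i * ∑ j with b i < b j, w j) + ∑ i, w i * b i := by
        simp only [mul_sum]; congr 1
        exact sum_congr rfl fun i _ => sum_congr rfl fun j _ => by ring
    _ ≤ h * ((∑ i, w i) ^ 2 - ∑ i, w i ^ 2) + ∑ i, w i * b i := by
        gcongr; exact two_mul_sum_mul_sum_filter_lt_le hw b
    _ = ∑ i, w i * a i + h * (∑ i, w i) ^ 2 := by
        have hb : ∑ i, w i * b i = ∑ i, w i * a i + h * ∑ i, w i ^ 2 := by
          simp only [b, mul_add, sum_add_distrib, mul_sum]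
          exact congrArg _ (sum_congr rfl fun i _ => by ring)
        rw [hb]; ring

theorem ordConnected_image_inner_iUnion {E ι : Type*} [NormedAddCommGroup E]
    [InnerProductSpace ℝ E] {A : ι → Set E}
    (hNS : ∀ (u : E) (c : ℝ), u ≠ 0 →
      ({y | ⟪u, y⟫ = c} ∩ convexHull ℝ (⋃ i, A i)).Nonempty →
      ∃ i, ({y | ⟪u, y⟫ = c} ∩ A i).Nonempty) (v : E) :
    ((⟪v, ·⟫) '' ⋃ i, A i).OrdConnected := by
  refine ⟨fun s hs t ht c hc => ?_⟩
  rcases eq_or_ne v 0 with rfl | hv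
  · obtain ⟨y, hy, rfl⟩ := hs
    obtain ⟨_, -, rfl⟩ := ht
    simp only [inner_zero_left, Set.Icc_self, Set.mem_singleton_iff] at hc
    exact hc ▸ ⟨y, hy, inner_zero_left y⟩
  have hconv : Convex ℝ ((⟪v, ·⟫) '' convexHull ℝ (⋃ i, A i)) :=
    (convex_convexHull ℝ _).linear_image (innerₛₗ ℝ v)
  have hsub := Set.image_mono (f := (⟪v, ·⟫)) (subset_convexHull ℝ (⋃ i, A i))
  obtain ⟨z, hz, rfl⟩ := hconv.ordConnected.out (hsub hs) (hsub ht) hc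
  obtain ⟨i, y, hyc, hyi⟩ := hNS v _ hv ⟨z, rfl, hz⟩
  exact ⟨y, Set.mem_iUnion.2 ⟨i, hyi⟩, hyc⟩

theorem inner_vadd_smul_mem_Icc {E : Type*} [NormedAddCommGroup E] [InnerProductSpace ℝ E]
    {K : Set E} (hKsym : K = -K) {v k₀ : E} (hmax : ∀ k ∈ K, ⟪v, k⟫ ≤ ⟪v, k₀⟫)
    (x : E) {t : ℝ} (ht : 0 ≤ t) {y : E} (hy : y ∈ x +ᵥ t • K) :
    ⟪v, y⟫ ∈ Set.Icc (⟪v, x⟫ - t * ⟪v, k₀⟫) (⟪v, x⟫ + t * ⟪v, k₀⟫) := by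
  obtain ⟨_, ⟨k, hk, rfl⟩, rfl⟩ := hy
  have hneg : ⟪v, -k⟫ ≤ ⟪v, k₀⟫ := hmax (-k) (by rw [hKsym]; simpa using hk)
  rw [inner_neg_right] at hneg
  have := hmax k hk
  simp only [vadd_eq_add, inner_add_right, real_inner_smul_right]
  constructor <;> nlinarith

theorem inner_le_inner_of_nonSeparable {E ι : Type*} [NormedAddCommGroup E]
    [InnerProductSpace ℝ E] [Fintype ι] {K : Set E} (hKsym : K = -K) (x : ι → E)
    {τ : ι → ℝ} (hτ : ∀ i, 0 < τ i)
    (hNS : ∀ (u : E) (c : ℝ), u ≠ 0 →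
      ({y | ⟪u, y⟫ = c} ∩ convexHull ℝ (⋃ i, x i +ᵥ τ i • K)).Nonempty →
      ∃ i, ({y | ⟪u, y⟫ = c} ∩ (x i +ᵥ τ i • K)).Nonempty)
    {v k₀ : E} (hk₀ : k₀ ∈ K) (hmax : ∀ k ∈ K, ⟪v, k⟫ ≤ ⟪v, k₀⟫)
    {p : E} (hp : p ∈ ⋃ i, x i +ᵥ τ i • K) :
    ⟪v, p⟫ ≤ ⟪v, (∑ i, τ i)⁻¹ • ∑ i, τ i • x i + (∑ i, τ i) • k₀⟫ := by
  obtain ⟨j, -⟩ := Set.mem_iUnion.1 hp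
  have hT : 0 < ∑ i, τ i := sum_pos (fun i _ => hτ i) ⟨j, mem_univ j⟩
  have hh : 0 ≤ ⟪v, k₀⟫ := by
    have := hmax (-k₀) (by rw [hKsym]; simpa using hk₀)
    rw [inner_neg_right] at this
    linarith
  have key := mul_le_sum_mul_add_of_ordConnected (fun i => (hτ i).le) hh
    (J := fun i => (⟪v, ·⟫) '' (x i +ᵥ τ i • K)) (a := fun i => ⟪v, x i⟫)
    (fun i => Set.image_subset_iff.2 fun y hy =>
      inner_vadd_smul_mem_Icc hKsym hmax (x i) (hτ i).le hy)
    (fun i => ⟨x i + τ i • k₀, Set.vadd_mem_vadd_set (Set.smul_mem_smul_set hk₀),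
      by simp only [inner_add_right, real_inner_smul_right]⟩)
    (by rw [← Set.image_iUnion]; exact ordConnected_image_inner_iUnion hNS v)
    (by rw [← Set.image_iUnion]; exact Set.mem_image_of_mem _ hp)
  simp only [inner_add_right, real_inner_smul_right, inner_sum]
  rw [← mul_le_mul_iff_of_pos_left hT]
  field_simp
  linarith

theorem stmt_7_general (d n : ℕ)
    (K₀ : Set (EuclideanSpace ℝ (Fin d)))
    (hKc : IsCompact K₀) (hKconv : Convex ℝ K₀)
    (hKsym : K₀ = -K₀)
    (x : Fin n → EuclideanSpace ℝ (Fin d)) (τ : Fin n → ℝ) (hτ : ∀ i, 0 < τ i)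
    (hNS : ∀ (u : EuclideanSpace ℝ (Fin d)) (c : ℝ), u ≠ 0 →
      ({y | ⟪u, y⟫ = c} ∩ convexHull ℝ (⋃ i, x i +ᵥ τ i • K₀)).Nonempty →
      ∃ i, ({y | ⟪u, y⟫ = c} ∩ (x i +ᵥ τ i • K₀)).Nonempty) :
    (⋃ i, x i +ᵥ τ i • K₀) ⊆ ((∑ i, τ i)⁻¹ • ∑ i, τ i • x i) +ᵥ (∑ i, τ i) • K₀ := by
  intro p hp
  obtain ⟨-, -, ⟨k, hk, -⟩, -⟩ := Set.mem_iUnion.1 hp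
  by_contra hp'
  obtain ⟨f, s, hf, hfp⟩ := geometric_hahn_banach_closed_point ((hKconv.smul _).vadd _)
    ((hKc.smul _).vadd _).isClosed hp'
  set v := (InnerProductSpace.toDual ℝ (EuclideanSpace ℝ (Fin d))).symm f
  obtain ⟨k₀, hk₀, hmax⟩ := hKc.exists_isMaxOn ⟨k, hk⟩ (innerSL ℝ v).continuous.continuousOn
  have hsupp := inner_le_inner_of_nonSeparable hKsym x hτ hNS hk₀ hmax hp
  have hsep := hf _ (Set.vadd_mem_vadd_set (Set.smul_mem_smul_set hk₀))
  rw [InnerProductSpace.toDual_symm_apply, InnerProductSpace.toDual_symm_apply] at hsupp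
  exact lt_asymm hfp (hsupp.trans_lt hsep)

/-- Goodman–Goodman for symmetric bodies: if `K₀ = -K₀` is an `o`-symmetric convex body and
`{x i + τ i • K₀}` is a non-separable family, then the family is covered by
`x̄ + (∑ τ i) • K₀`, where `x̄ = (∑ τ i • x i) / (∑ τ i)`. -/
theorem stmt_7 (d n : ℕ) (hd : 2 ≤ d) (hn : 1 ≤ n)
    (K₀ : Set (EuclideanSpace ℝ (Fin d)))
    (hKc : IsCompact K₀) (hKconv : Convex ℝ K₀) (hKint : (interior K₀).Nonempty)
    (hKsym : K₀ = -K₀)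
    (x : Fin n → EuclideanSpace ℝ (Fin d)) (τ : Fin n → ℝ) (hτ : ∀ i, 0 < τ i)
    (hNS : ∀ (u : EuclideanSpace ℝ (Fin d)) (c : ℝ), u ≠ 0 →
      ({y | ⟪u, y⟫ = c} ∩ convexHull ℝ (⋃ i, x i +ᵥ τ i • K₀)).Nonempty →
      ∃ i, ({y | ⟪u, y⟫ = c} ∩ (x i +ᵥ τ i • K₀)).Nonempty) :
    (⋃ i, x i +ᵥ τ i • K₀) ⊆ ((∑ i, τ i)⁻¹ • ∑ i, τ i • x i) +ᵥ (∑ i, τ i) • K₀ :=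
  stmt_7_general d n K₀ hKc hKconv hKsym x τ hτ hNS
end

section
/- Let $K_0$ be an $o$-symmetric convex body in $\mathbb{R}^d$ and let $\mathcal{K} = \{x_i + \tau_i K_0 : i=1,\dots,n\}$, $\tau_i>0$, be a non-separable family. Then for every unit vector $u$, the support function satisfies $h_{\mathrm{conv}\bigcup\mathcal{K}}(u) \le \langle x, u\rangle + \left(\sum_{i=1}^n\tau_i\right) h_{K_0}(u)$, where $x = \left(\sum_i \tau_i x_i\right)/\left(\sum_i \tau_i\right)$. -/
open scoped Pointwise RealInnerProductSpace

/-! Project onto `u`. With `aᵢ = ⟪xᵢ, u⟫` and `h = h_{K₀}(u)`, symmetry of `K₀` puts the image of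
the `i`-th body in `[aᵢ - τᵢ h, bᵢ]`, `bᵢ = aᵢ + τᵢ h`, and `bᵢ` is attained. The image of the hull
is an interval, and non-separability says it is covered by these intervals. Hence for all `i, j`
the gap `(bⱼ, bᵢ]` is covered by the intervals with `bₖ > bⱼ`, so `bᵢ - bⱼ ≤ 2h ∑_{bₖ > bⱼ} τₖ`.
Weighting by `τⱼ` and summing counts every pair `{j, k}` at most once, which gives
`T bᵢ - ∑ τⱼ aⱼ - h ∑ τⱼ² ≤ h (T² - ∑ τⱼ²)` with `T = ∑ τⱼ`, i.e. `bᵢ ≤ (∑ τⱼ aⱼ) / T + T h`. -/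

open Finset MeasureTheory

theorem sub_le_sum_of_Ioc_subset_biUnion_Icc {ι : Type*} (s : Finset ι) (lo hi : ι → ℝ)
    (hlohi : ∀ k ∈ s, lo k ≤ hi k) {p q : ℝ}
    (hcov : Set.Ioc p q ⊆ ⋃ k ∈ s, Set.Icc (lo k) (hi k)) :
    q - p ≤ ∑ k ∈ s, (hi k - lo k) := by
  have hlen : ∀ k ∈ s, 0 ≤ hi k - lo k := fun k hk => sub_nonneg.2 (hlohi k hk)
  rw [← ENNReal.ofReal_le_ofReal_iff (sum_nonneg hlen), ENNReal.ofReal_sum_of_nonneg hlen,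
    ← Real.volume_Ioc]
  simp_rw [← Real.volume_Icc]
  exact (measure_mono hcov).trans (measure_biUnion_finset_le s _)

theorem two_mul_sum_filter_lt_add_sum_sq_le_sq_sum {ι : Type*} [Fintype ι] (τ b : ι → ℝ)
    (hτ : ∀ i, 0 ≤ τ i) :
    2 * ∑ j, ∑ k with b j < b k, τ j * τ k + ∑ j, τ j ^ 2 ≤ (∑ j, τ j) ^ 2 := by
  classical
  have hpoint : ∀ j k, ((if b j < b k then τ j * τ k else 0)
      + (if b k < b j then τ j * τ k else 0)) + (if j = k then τ j * τ k else 0) ≤ τ j * τ k := by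
    intro j k
    have := mul_nonneg (hτ j) (hτ k)
    by_cases hjk : j = k
    · subst hjk; simp
    · simp only [hjk, if_false, add_zero]
      split_ifs <;> linarith
  have hswap : ∑ j, ∑ k, (if b k < b j then τ j * τ k else 0)
      = ∑ j, ∑ k, (if b j < b k then τ j * τ k else 0) := by
    rw [sum_comm]
    exact sum_congr rfl fun j _ => sum_congr rfl fun k _ => by rw [mul_comm]
  calc 2 * ∑ j, ∑ k with b j < b k, τ j * τ k + ∑ j, τ j ^ 2
      = ∑ j, ∑ k, (((if b j < b k then τ j * τ k else 0) + (if b k < b j then τ j * τ k else 0))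
          + (if j = k then τ j * τ k else 0)) := by
        simp only [sum_add_distrib, hswap, sum_filter, sum_ite_eq, mem_univ, if_true, sq]
        ring
    _ ≤ ∑ j, ∑ k, τ j * τ k := sum_le_sum fun j _ => sum_le_sum fun k _ => hpoint j k
    _ = (∑ j, τ j) ^ 2 := by rw [sq, sum_mul_sum]

theorem sum_mul_add_mul_le_of_Icc_cover {ι : Type*} [Fintype ι] (a τ : ι → ℝ) {h : ℝ}
    (hτ : ∀ i, 0 ≤ τ i) (hh : 0 ≤ h)
    (hcover : ∀ j k c, a j + τ j * h < c → c ≤ a k + τ k * h →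
      ∃ i, c ∈ Set.Icc (a i - τ i * h) (a i + τ i * h)) (i : ι) :
    (∑ j, τ j) * (a i + τ i * h) ≤ ∑ j, τ j * a j + (∑ j, τ j) ^ 2 * h := by
  set b : ι → ℝ := fun j => a j + τ j * h
  have hgap : ∀ j, b i - b j ≤ (∑ k with b j < b k, τ k) * (2 * h) := by
    intro j
    have hcov : Set.Ioc (b j) (b i) ⊆
        ⋃ k ∈ univ.filter (fun k => b j < b k), Set.Icc (a k - τ k * h) (b k) := by
      rintro c ⟨hjc, hci⟩
      obtain ⟨k, hk⟩ := hcover j i c hjc hci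
      exact Set.mem_biUnion (mem_filter.2 ⟨mem_univ _, hjc.trans_le hk.2⟩) hk
    refine (sub_le_sum_of_Ioc_subset_biUnion_Icc _ (fun k => a k - τ k * h) b
      (fun k _ => by nlinarith [hτ k]) hcov).trans_eq ?_
    rw [sum_mul]
    exact sum_congr rfl fun k _ => by ring
  have hpairs := two_mul_sum_filter_lt_add_sum_sq_le_sq_sum τ b hτ
  calc (∑ j, τ j) * b i
      = ∑ j, τ j * a j + ∑ j, τ j * (b i - b j) + h * ∑ j, τ j ^ 2 := by
        simp only [b, mul_sub, mul_add, sum_sub_distrib, sum_add_distrib, sum_mul, mul_sum]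
        rw [sum_congr rfl fun j _ => (by ring : τ j * (τ j * h) = h * τ j ^ 2)]
        ring
    _ ≤ ∑ j, τ j * a j + ∑ j, τ j * ((∑ k with b j < b k, τ k) * (2 * h))
          + h * ∑ j, τ j ^ 2 := by
        gcongr with j; exacts [hτ j, hgap j]
    _ = ∑ j, τ j * a j + h * (2 * ∑ j, ∑ k with b j < b k, τ j * τ k + ∑ j, τ j ^ 2) := by
        simp only [mul_add, mul_sum, sum_mul, ← add_assoc]
        congr 2
        exact sum_congr rfl fun j _ => sum_congr rfl fun k _ => by ring
    _ ≤ ∑ j, τ j * a j + (∑ j, τ j) ^ 2 * h := by nlinarith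

section InnerProductSpace

variable {E : Type*} [NormedAddCommGroup E] [InnerProductSpace ℝ E]

theorem isLinearMap_inner_left (u : E) : IsLinearMap ℝ fun y : E => ⟪y, u⟫ :=
  ⟨fun p q => inner_add_left p q u, fun c p => real_inner_smul_left p u c⟩

theorem abs_inner_le_sSup_image_inner_of_eq_neg {K : Set E} (hKsym : K = -K) {u : E}
    (hbdd : BddAbove ((fun y => ⟪y, u⟫) '' K)) {z : E} (hz : z ∈ K) :
    |⟪z, u⟫| ≤ sSup ((fun y => ⟪y, u⟫) '' K) := by
  have hnz : -z ∈ K := by rw [hKsym]; exact Set.neg_mem_neg.2 hz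
  refine abs_le'.2 ⟨le_csSup hbdd ⟨z, hz, rfl⟩, ?_⟩
  simpa only [inner_neg_left] using le_csSup hbdd ⟨-z, hnz, rfl⟩

theorem inner_mem_Icc_of_mem_vadd_smul {K : Set E} {u : E} {h t : ℝ}
    (hK : ∀ z ∈ K, |⟪z, u⟫| ≤ h) (ht : 0 ≤ t) (x : E) {y : E} (hy : y ∈ x +ᵥ t • K) :
    ⟪y, u⟫ ∈ Set.Icc (⟪x, u⟫ - t * h) (⟪x, u⟫ + t * h) := by
  obtain ⟨_, ⟨z, hz, rfl⟩, rfl⟩ := hy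
  have := abs_le.1 (hK z hz)
  change ⟪x + t • z, u⟫ ∈ _
  rw [inner_add_left, real_inner_smul_left]
  constructor <;> nlinarith

theorem exists_inner_eq_of_mem_Icc {ι : Type*} {B : ι → Set E} {u : E}
    (hNS : ∀ c, ({y | ⟪u, y⟫ = c} ∩ convexHull ℝ (⋃ i, B i)).Nonempty →
      ∃ i, ({y | ⟪u, y⟫ = c} ∩ B i).Nonempty)
    {p q : E} (hp : p ∈ ⋃ i, B i) (hq : q ∈ ⋃ i, B i) {c : ℝ} (hc : c ∈ Set.Icc ⟪p, u⟫ ⟪q, u⟫) :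
    ∃ i, ∃ y ∈ B i, ⟪y, u⟫ = c := by
  obtain ⟨y, hy, rfl⟩ :=
    ((convex_convexHull ℝ _).is_linear_image (isLinearMap_inner_left u)).ordConnected.out
      ⟨p, subset_convexHull ℝ _ hp, rfl⟩ ⟨q, subset_convexHull ℝ _ hq, rfl⟩ hc
  obtain ⟨i, y', hy'c : ⟪u, y'⟫ = ⟪y, u⟫, hy'i⟩ := hNS _ ⟨y, real_inner_comm y u, hy⟩
  exact ⟨i, y', hy'i, (real_inner_comm u y').trans hy'c⟩

theorem sSup_inner_image_convexHull_le {S : Set E} (hS : S.Nonempty) (u : E) {r : ℝ}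
    (hr : ∀ y ∈ S, ⟪y, u⟫ ≤ r) :
    sSup ((fun y => ⟪y, u⟫) '' convexHull ℝ S) ≤ r := by
  refine csSup_le ((hS.mono (subset_convexHull ℝ S)).image _) ?_
  rintro _ ⟨y, hy, rfl⟩
  exact convexHull_min hr (convex_halfSpace_le (isLinearMap_inner_left u) r) hy

end InnerProductSpace

theorem stmt_8_general (d n : ℕ) (hn : 1 ≤ n)
    (K₀ : Set (EuclideanSpace ℝ (Fin d)))
    (hKc : IsCompact K₀) (hKint : (interior K₀).Nonempty)
    (hKsym : K₀ = -K₀)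
    (x : Fin n → EuclideanSpace ℝ (Fin d)) (τ : Fin n → ℝ) (hτ : ∀ i, 0 < τ i)
    (hNS : ∀ (u : EuclideanSpace ℝ (Fin d)) (c : ℝ), u ≠ 0 →
      ({y | ⟪u, y⟫ = c} ∩ convexHull ℝ (⋃ i, x i +ᵥ τ i • K₀)).Nonempty →
      ∃ i, ({y | ⟪u, y⟫ = c} ∩ (x i +ᵥ τ i • K₀)).Nonempty)
    (u : EuclideanSpace ℝ (Fin d)) (hu : ‖u‖ = 1) :
    sSup ((fun y => ⟪y, u⟫) '' convexHull ℝ (⋃ i, x i +ᵥ τ i • K₀)) ≤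
      ⟪(∑ i, τ i)⁻¹ • ∑ i, τ i • x i, u⟫ + (∑ i, τ i) * sSup ((fun y => ⟪y, u⟫) '' K₀) := by
  set h := sSup ((fun y => ⟪y, u⟫) '' K₀)
  set T := ∑ i, τ i
  have hu0 : u ≠ 0 := by rintro rfl; simp at hu
  have hK := hKc.image (by fun_prop : Continuous fun y : EuclideanSpace ℝ (Fin d) => ⟪y, u⟫)
  obtain ⟨z₀, hz₀, hz₀h : ⟪z₀, u⟫ = h⟩ := hK.sSup_mem ((hKint.mono interior_subset).image _)
  have hbound : ∀ z ∈ K₀, |⟪z, u⟫| ≤ h :=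
    fun z hz => abs_inner_le_sSup_image_inner_of_eq_neg hKsym hK.bddAbove hz
  have hh : 0 ≤ h := (abs_nonneg _).trans (hbound z₀ hz₀)
  have hbody : ∀ i, ∀ y ∈ x i +ᵥ τ i • K₀,
      ⟪y, u⟫ ∈ Set.Icc (⟪x i, u⟫ - τ i * h) (⟪x i, u⟫ + τ i * h) :=
    fun i _ => inner_mem_Icc_of_mem_vadd_smul hbound (hτ i).le (x i)
  have htop : ∀ i, x i + τ i • z₀ ∈ ⋃ i, x i +ᵥ τ i • K₀ := fun i =>
    Set.mem_iUnion.2 ⟨i, Set.vadd_mem_vadd_set (Set.smul_mem_smul_set hz₀)⟩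
  have htop_val : ∀ i, ⟪x i + τ i • z₀, u⟫ = ⟪x i, u⟫ + τ i * h := fun i => by
    rw [inner_add_left, real_inner_smul_left, hz₀h]
  have hcover : ∀ j k c, ⟪x j, u⟫ + τ j * h < c → c ≤ ⟪x k, u⟫ + τ k * h →
      ∃ i, c ∈ Set.Icc (⟪x i, u⟫ - τ i * h) (⟪x i, u⟫ + τ i * h) := by
    intro j k c hjc hck
    obtain ⟨i, y, hy, rfl⟩ := exists_inner_eq_of_mem_Icc (hNS u · hu0) (htop j) (htop k)
      ⟨(htop_val j).trans_le hjc.le, hck.trans_eq (htop_val k).symm⟩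
    exact ⟨i, hbody i y hy⟩
  have hTpos : 0 < T := sum_pos (fun i _ => hτ i) ⟨⟨0, hn⟩, mem_univ _⟩
  refine sSup_inner_image_convexHull_le ⟨_, htop ⟨0, hn⟩⟩ u fun y hy => ?_
  obtain ⟨i, hyi⟩ := Set.mem_iUnion.1 hy
  have hkey := sum_mul_add_mul_le_of_Icc_cover _ τ (fun i => (hτ i).le) hh hcover i
  calc ⟪y, u⟫ ≤ ⟪x i, u⟫ + τ i * h := (hbody i y hyi).2
    _ ≤ T⁻¹ * ∑ j, τ j * ⟪x j, u⟫ + T * h := by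
      rw [← mul_le_mul_iff_right₀ hTpos]
      field_simp
      linarith
    _ = _ := by simp only [real_inner_smul_left, sum_inner]

/-- Support function form: for an `o`-symmetric convex body `K₀` and a non-separable family
`{x i + τ i • K₀}`, for every unit vector `u`,
`h_{conv ⋃ 𝒦}(u) ≤ ⟪x̄, u⟫ + (∑ τ i) h_{K₀}(u)` where `x̄ = (∑ τ i • x i)/(∑ τ i)`. -/
theorem stmt_8 (d n : ℕ) (hd : 2 ≤ d) (hn : 1 ≤ n)
    (K₀ : Set (EuclideanSpace ℝ (Fin d)))
    (hKc : IsCompact K₀) (hKconv : Convex ℝ K₀) (hKint : (interior K₀).Nonempty)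
    (hKsym : K₀ = -K₀)
    (x : Fin n → EuclideanSpace ℝ (Fin d)) (τ : Fin n → ℝ) (hτ : ∀ i, 0 < τ i)
    (hNS : ∀ (u : EuclideanSpace ℝ (Fin d)) (c : ℝ), u ≠ 0 →
      ({y | ⟪u, y⟫ = c} ∩ convexHull ℝ (⋃ i, x i +ᵥ τ i • K₀)).Nonempty →
      ∃ i, ({y | ⟪u, y⟫ = c} ∩ (x i +ᵥ τ i • K₀)).Nonempty)
    (u : EuclideanSpace ℝ (Fin d)) (hu : ‖u‖ = 1) :
    sSup ((fun y => ⟪y, u⟫) '' convexHull ℝ (⋃ i, x i +ᵥ τ i • K₀)) ≤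
      ⟪(∑ i, τ i)⁻¹ • ∑ i, τ i • x i, u⟫ + (∑ i, τ i) * sSup ((fun y => ⟪y, u⟫) '' K₀) :=
  stmt_8_general d n hn K₀ hKc hKint hKsym x τ hτ hNS u hu
end

section
/- Let $K_1 = x_1 + \tau_1 K$ and $K_2 = x_2 + \tau_2 K$ be intersecting positive homothets of a convex body $K$ in $\mathbb{R}^d$, and let $K' = y + \tau' K$ be a positive homothet of $K$ containing $K_1 \cup K_2$ such that some pair of parallel supporting hyperplanes of $K'$ with common unit normal $u$ satisfies $H_1 \cap K_1 \neq \emptyset$ and $H_2 \cap K_2 \neq \emptyset$. Then $\tau' \cdot \mathrm{width}_u(K) \le \tau_1 \mathrm{width}_u(K) + \tau_2 \mathrm{width}_u(K)$, hence $\tau' \le \tau_1 + \tau_2$ (assuming $\mathrm{width}_u(K) > 0$). -/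
open scoped Pointwise RealInnerProductSpace

/-!
Along a linear functional `f`, a homothet `x + τ K` with `τ ≥ 0` spans exactly `τ` times the
width of `K`. The intersection point `z` of `K₁` and `K₂` splits the gap between the two
supporting levels: `c₁ - c₂ = (f p - f z) + (f z - f q)` with `p, z ∈ K₁` and `z, q ∈ K₂`, so
`c₁ - c₂ ≤ (τ₁ + τ₂) width K`, while `K'` lies between the levels and so `τ' width K ≤ c₁ - c₂`.
-/

section Width

variable {E : Type*} [AddCommGroup E] [Module ℝ E] (f : E →ₗ[ℝ] ℝ)

noncomputable def width (K : Set E) : ℝ := sSup (f '' K) - sInf (f '' K)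

variable {f} {K : Set E} {x : E} {τ : ℝ}

theorem exists_mem_apply_eq_of_mem_vadd_smul {z : E} (hz : z ∈ x +ᵥ τ • K) :
    ∃ k ∈ K, f z = f x + τ * f k := by
  obtain ⟨_, ⟨k, hk, rfl⟩, rfl⟩ := hz
  exact ⟨k, hk, by simp⟩

theorem apply_sub_apply_le_mul_width (hτ : 0 ≤ τ) (hKa : BddAbove (f '' K))
    (hKb : BddBelow (f '' K)) {z w : E} (hz : z ∈ x +ᵥ τ • K) (hw : w ∈ x +ᵥ τ • K) :
    f z - f w ≤ τ * width f K := by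
  obtain ⟨k, hk, hfz⟩ := exists_mem_apply_eq_of_mem_vadd_smul hz
  obtain ⟨l, hl, hfw⟩ := exists_mem_apply_eq_of_mem_vadd_smul hw
  have hk_le : f k ≤ sSup (f '' K) := le_csSup hKa (Set.mem_image_of_mem f hk)
  have hl_ge : sInf (f '' K) ≤ f l := csInf_le hKb (Set.mem_image_of_mem f hl)
  rw [hfz, hfw, width]
  nlinarith

theorem exists_apply_sub_apply_eq_mul_width [TopologicalSpace E] (hf : Continuous f)
    (hK : IsCompact K) (hKne : K.Nonempty) (x : E) (τ : ℝ) :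
    ∃ z ∈ x +ᵥ τ • K, ∃ w ∈ x +ᵥ τ • K, f z - f w = τ * width f K := by
  have hfK : IsCompact (f '' K) := hK.image hf
  obtain ⟨k, hk, hfk⟩ := hfK.sSup_mem (hKne.image f)
  obtain ⟨l, hl, hfl⟩ := hfK.sInf_mem (hKne.image f)
  refine ⟨x +ᵥ τ • k, Set.vadd_mem_vadd_set (Set.smul_mem_smul_set hk),
    x +ᵥ τ • l, Set.vadd_mem_vadd_set (Set.smul_mem_smul_set hl), ?_⟩
  simp only [vadd_eq_add, map_add, map_smul, smul_eq_mul, hfk, hfl, width]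
  ring

theorem mul_width_le_of_forall_mem_Icc [TopologicalSpace E] (hf : Continuous f)
    (hK : IsCompact K) (hKne : K.Nonempty) {c₁ c₂ : ℝ}
    (hsupp : ∀ z ∈ x +ᵥ τ • K, f z ∈ Set.Icc c₂ c₁) :
    τ * width f K ≤ c₁ - c₂ := by
  obtain ⟨z, hz, w, hw, hzw⟩ := exists_apply_sub_apply_eq_mul_width hf hK hKne x τ
  linarith [(hsupp z hz).2, (hsupp w hw).1]

theorem sub_le_mul_width_add_mul_width {x₁ x₂ : E} {τ₁ τ₂ c₁ c₂ : ℝ}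
    (hτ₁ : 0 ≤ τ₁) (hτ₂ : 0 ≤ τ₂) (hKa : BddAbove (f '' K)) (hKb : BddBelow (f '' K))
    (hint : ((x₁ +ᵥ τ₁ • K) ∩ (x₂ +ᵥ τ₂ • K)).Nonempty)
    (htouch₁ : ∃ p ∈ x₁ +ᵥ τ₁ • K, f p = c₁) (htouch₂ : ∃ q ∈ x₂ +ᵥ τ₂ • K, f q = c₂) :
    c₁ - c₂ ≤ τ₁ * width f K + τ₂ * width f K := by
  obtain ⟨p, hp, rfl⟩ := htouch₁
  obtain ⟨q, hq, rfl⟩ := htouch₂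
  obtain ⟨z, hz₁, hz₂⟩ := hint
  calc f p - f q = (f p - f z) + (f z - f q) := by ring
    _ ≤ τ₁ * width f K + τ₂ * width f K :=
      add_le_add (apply_sub_apply_le_mul_width hτ₁ hKa hKb hp hz₁)
        (apply_sub_apply_le_mul_width hτ₂ hKa hKb hz₂ hq)

end Width

theorem stmt_10_general (d : ℕ) (K : Set (EuclideanSpace ℝ (Fin d)))
    (hKc : IsCompact K)
    (x₁ x₂ y : EuclideanSpace ℝ (Fin d)) (τ₁ τ₂ τ' : ℝ)
    (hτ₁ : 0 < τ₁) (hτ₂ : 0 < τ₂)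
    (hint : ((x₁ +ᵥ τ₁ • K) ∩ (x₂ +ᵥ τ₂ • K)).Nonempty)
    (u : EuclideanSpace ℝ (Fin d)) (c₁ c₂ : ℝ)
    (hsupp : ∀ z ∈ y +ᵥ τ' • K, c₂ ≤ ⟪u, z⟫ ∧ ⟪u, z⟫ ≤ c₁)
    (htouch₁ : ∃ p ∈ x₁ +ᵥ τ₁ • K, ⟪u, p⟫ = c₁)
    (htouch₂ : ∃ q ∈ x₂ +ᵥ τ₂ • K, ⟪u, q⟫ = c₂) :
    τ' * (sSup ((fun z => ⟪u, z⟫) '' K) - sInf ((fun z => ⟪u, z⟫) '' K)) ≤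
        τ₁ * (sSup ((fun z => ⟪u, z⟫) '' K) - sInf ((fun z => ⟪u, z⟫) '' K)) +
          τ₂ * (sSup ((fun z => ⟪u, z⟫) '' K) - sInf ((fun z => ⟪u, z⟫) '' K)) ∧
      (0 < sSup ((fun z => ⟪u, z⟫) '' K) - sInf ((fun z => ⟪u, z⟫) '' K) → τ' ≤ τ₁ + τ₂) := by
  set f := innerₛₗ ℝ u
  have hf : Continuous f := continuous_const.inner continuous_id
  rw [← coe_innerₛₗ_apply]
  change τ' * width f K ≤ τ₁ * width f K + τ₂ * width f K ∧ (0 < width f K → τ' ≤ τ₁ + τ₂)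
  have hKne : K.Nonempty := by
    obtain ⟨_, ⟨_, ⟨k, hk, -⟩, -⟩, -⟩ := hint
    exact ⟨k, hk⟩
  have hwidth : τ' * width f K ≤ τ₁ * width f K + τ₂ * width f K :=
    (mul_width_le_of_forall_mem_Icc hf hKc hKne hsupp).trans
      (sub_le_mul_width_add_mul_width hτ₁.le hτ₂.le (hKc.image hf).bddAbove
        (hKc.image hf).bddBelow hint htouch₁ htouch₂)
  exact ⟨hwidth, fun hw => le_of_mul_le_mul_right (by linarith) hw⟩

/-- If intersecting homothets `K₁ = x₁ + τ₁ • K` and `K₂ = x₂ + τ₂ • K` are contained in a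
homothet `K' = y + τ' • K` which has a pair of parallel supporting hyperplanes with unit
normal `u` (given by levels `c₂ ≤ ⟪u,·⟫ ≤ c₁`) touching `K₁` resp. `K₂`, then
`τ' · width_u K ≤ τ₁ · width_u K + τ₂ · width_u K`, and hence `τ' ≤ τ₁ + τ₂`
whenever `width_u K > 0`. -/
theorem stmt_10 (d : ℕ) (hd : 2 ≤ d) (K : Set (EuclideanSpace ℝ (Fin d)))
    (hKc : IsCompact K) (hKconv : Convex ℝ K) (hKint : (interior K).Nonempty)
    (x₁ x₂ y : EuclideanSpace ℝ (Fin d)) (τ₁ τ₂ τ' : ℝ)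
    (hτ₁ : 0 < τ₁) (hτ₂ : 0 < τ₂) (hτ' : 0 < τ')
    (hint : ((x₁ +ᵥ τ₁ • K) ∩ (x₂ +ᵥ τ₂ • K)).Nonempty)
    (hcover : (x₁ +ᵥ τ₁ • K) ∪ (x₂ +ᵥ τ₂ • K) ⊆ y +ᵥ τ' • K)
    (u : EuclideanSpace ℝ (Fin d)) (hu : ‖u‖ = 1) (c₁ c₂ : ℝ)
    (hsupp : ∀ z ∈ y +ᵥ τ' • K, c₂ ≤ ⟪u, z⟫ ∧ ⟪u, z⟫ ≤ c₁)
    (htouch₁ : ∃ p ∈ x₁ +ᵥ τ₁ • K, ⟪u, p⟫ = c₁)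
    (htouch₂ : ∃ q ∈ x₂ +ᵥ τ₂ • K, ⟪u, q⟫ = c₂) :
    τ' * (sSup ((fun z => ⟪u, z⟫) '' K) - sInf ((fun z => ⟪u, z⟫) '' K)) ≤
        τ₁ * (sSup ((fun z => ⟪u, z⟫) '' K) - sInf ((fun z => ⟪u, z⟫) '' K)) +
          τ₂ * (sSup ((fun z => ⟪u, z⟫) '' K) - sInf ((fun z => ⟪u, z⟫) '' K)) ∧
      (0 < sSup ((fun z => ⟪u, z⟫) '' K) - sInf ((fun z => ⟪u, z⟫) '' K) → τ' ≤ τ₁ + τ₂) :=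
  stmt_10_general d K hKc x₁ x₂ y τ₁ τ₂ τ' hτ₁ hτ₂ hint u c₁ c₂ hsupp htouch₁ htouch₂
end

section
/- Let $K$ be a strictly convex body in $\mathbb{R}^2$ and let $K_1, \dots, K_n$ be positive homothets of $K$ whose union $\bigcup_{i=1}^n K_i$ is convex. Then there exists $i^*$ such that $\bigcup_{i=1}^n K_i = K_{i^*}$. -/
/-!
Compare the homothets `Kᵢ` through their support functions `hᵢ` and let `Aᵢ` be the set of
directions `v ≠ 0` in which `hᵢ` is maximal. If `v ∈ Aᵢ ∩ Aⱼ`, the points of the convex union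
on its supporting hyperplane in direction `v` form a convex set, and by strict convexity they
are among the finitely many points `xₖ + τₖ q`, where `q` is the point of `K` extreme in
direction `v`. A finite convex set is a single point, so `xᵢ + τᵢ q = xⱼ + τⱼ q`, and then the
smaller of `Kᵢ`, `Kⱼ` is the image of the larger under a homothety centred there; hence
`Aᵢ ⊆ Aⱼ` or `Aⱼ ⊆ Aᵢ`. Closed sets that cover the connected space of nonzero directions
(dimension at least two) and are pairwise nested or disjoint must include the whole space,
so some `hₘ` dominates every `hⱼ`, and by separation `Kₘ` contains every `Kⱼ`.
-/

open scoped Pointwise RealInnerProductSpace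

open Set

theorem ConnectedSpace.exists_eq_univ_of_laminar_closed_cover {X ι : Type*} [TopologicalSpace X]
    [ConnectedSpace X] [Finite ι] {A : ι → Set X} (hA : ∀ i, IsClosed (A i))
    (hcover : ∀ u, ∃ i, u ∈ A i)
    (hlaminar : ∀ i j, (A i ∩ A j).Nonempty → A i ⊆ A j ∨ A j ⊆ A i) :
    ∃ i, A i = univ := by
  obtain ⟨u₀⟩ := ConnectedSpace.toNonempty (α := X)
  obtain ⟨m, hm, hmax⟩ := (toFinite {i | u₀ ∈ A i}).exists_maximalFor A _ (hcover u₀)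
  have hcompl : (A m)ᶜ = ⋃ j ∈ {j | ¬A j ⊆ A m}, A j := by
    ext u
    simp only [mem_compl_iff, mem_iUnion, mem_ofPred_eq, exists_prop]
    constructor
    · intro hu
      obtain ⟨j, hj⟩ := hcover u
      exact ⟨j, fun h => hu (h hj), hj⟩
    · rintro ⟨j, hjm, hj⟩ hu
      rcases hlaminar j m ⟨u, hj, hu⟩ with h | h
      · exact hjm h
      · exact hjm (hmax (h hm) h)
  refine ⟨m, IsClopen.eq_univ ⟨hA m, ?_⟩ ⟨u₀, hm⟩⟩
  rw [← isClosed_compl_iff, hcompl]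
  exact (toFinite _).isClosed_biUnion fun j _ => hA j

theorem Convex.subsingleton_of_finite {𝕜 E : Type*} [Field 𝕜] [LinearOrder 𝕜]
    [IsStrictOrderedRing 𝕜] [AddCommGroup E] [Module 𝕜 E] {s : Set E} (hs : Convex 𝕜 s)
    (hfin : s.Finite) : s.Subsingleton := by
  intro a ha b hb
  by_contra hab
  have hinf : (AffineMap.lineMap a b '' Icc (0 : 𝕜) 1).Infinite :=
    (Icc_infinite zero_lt_one).image (AffineMap.lineMap_injective 𝕜 hab).injOn
  exact hinf (hfin.subset (segment_eq_image_lineMap 𝕜 a b ▸ hs.segment_subset ha hb))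

section SupportFunction

variable {E : Type*} [NormedAddCommGroup E] [InnerProductSpace ℝ E]

noncomputable def supportFun (s : Set E) (v : E) : ℝ := sSup ((⟪·, v⟫) '' s)

theorem IsCompact.inner_le_supportFun {s : Set E} (hs : IsCompact s) {p : E} (hp : p ∈ s)
    (v : E) : ⟪p, v⟫ ≤ supportFun s v :=
  le_csSup (hs.image (continuous_id.inner continuous_const)).bddAbove (mem_image_of_mem _ hp)

theorem supportFun_le {s : Set E} (hs : s.Nonempty) {v : E} {c : ℝ}
    (h : ∀ p ∈ s, ⟪p, v⟫ ≤ c) : supportFun s v ≤ c :=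
  csSup_le (hs.image _) (forall_mem_image.2 h)

theorem IsCompact.exists_inner_eq_supportFun {s : Set E} (hs : IsCompact s) (hne : s.Nonempty)
    (v : E) : ∃ p ∈ s, ⟪p, v⟫ = supportFun s v :=
  (hs.image (continuous_id.inner continuous_const)).sSup_mem (hne.image _)

theorem supportFun_mono {s t : Set E} (hst : s ⊆ t) (hs : s.Nonempty) (ht : IsCompact t)
    (v : E) : supportFun s v ≤ supportFun t v :=
  supportFun_le hs fun _ hp => ht.inner_le_supportFun (hst hp) v

theorem IsCompact.continuous_supportFun {s : Set E} (hs : IsCompact s) :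
    Continuous (supportFun s) := by
  rcases s.eq_empty_or_nonempty with rfl | hne
  · have : supportFun (∅ : Set E) = fun _ => 0 := by ext; simp [supportFun]
    exact this ▸ continuous_const
  obtain ⟨R, hR⟩ := hs.isBounded.exists_norm_le
  refine (LipschitzWith.of_le_add_mul R.toNNReal fun u v =>
    supportFun_le hne fun p hp => ?_).continuous
  calc ⟪p, u⟫ = ⟪p, v⟫ + ⟪p, u - v⟫ := by rw [← inner_add_right, add_sub_cancel]
    _ ≤ supportFun s v + ‖p‖ * ‖u - v‖ :=
        add_le_add (hs.inner_le_supportFun hp v) (real_inner_le_norm _ _)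
    _ ≤ supportFun s v + R.toNNReal * dist u v := by
        rw [dist_eq_norm]
        gcongr
        exact (hR p hp).trans (Real.le_coe_toNNReal R)

theorem supportFun_vadd_smul {K : Set E} (hK : IsCompact K) {q v : E} (hq : q ∈ K)
    (hqv : ⟪q, v⟫ = supportFun K v) (a : E) {t : ℝ} (ht : 0 ≤ t) :
    supportFun (a +ᵥ t • K) v = ⟪a + t • q, v⟫ := by
  refine le_antisymm (supportFun_le ⟨_, vadd_mem_vadd_set (smul_mem_smul_set hq)⟩ ?_)
    (((hK.smul t).vadd a).inner_le_supportFun (vadd_mem_vadd_set (smul_mem_smul_set hq)) v)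
  rintro _ ⟨_, ⟨y, hy, rfl⟩, rfl⟩
  simp only [vadd_eq_add, inner_add_left, real_inner_smul_left]
  gcongr
  exact hqv ▸ hK.inner_le_supportFun hy v

theorem StrictConvex.eq_of_supportFun_le {s : Set E} (hs : StrictConvex ℝ s) (hc : IsCompact s)
    {v : E} (hv : v ≠ 0) {p p' : E} (hp : p ∈ s) (hp' : p' ∈ s)
    (hpv : supportFun s v ≤ ⟪p, v⟫) (hp'v : supportFun s v ≤ ⟪p', v⟫) : p = p' := by
  by_contra hne
  have hz : (1 / 2 : ℝ) • p + (1 / 2 : ℝ) • p' ∈ interior s :=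
    hs hp hp' hne one_half_pos one_half_pos (add_halves 1)
  set z := (1 / 2 : ℝ) • p + (1 / 2 : ℝ) • p'
  have hcont : Filter.Tendsto (fun ε : ℝ => z + ε • v) (nhds 0) (nhds z) := by
    have h : Continuous fun ε : ℝ => z + ε • v := by fun_prop
    simpa only [zero_smul, add_zero] using h.tendsto 0
  have hev : ∀ᶠ ε in nhds (0 : ℝ), z + ε • v ∈ s :=
    (hcont.eventually (isOpen_interior.mem_nhds hz)).mono fun _ h => interior_subset h
  obtain ⟨ε, hεs, hε⟩ : ∃ ε : ℝ, z + ε • v ∈ s ∧ ε ∈ Ioi 0 :=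
    ((hev.filter_mono nhdsWithin_le_nhds).and self_mem_nhdsWithin :
      ∀ᶠ ε in nhdsWithin (0 : ℝ) (Ioi 0), z + ε • v ∈ s ∧ ε ∈ Ioi 0).exists
  have hzv : supportFun s v ≤ ⟪z, v⟫ := by
    simp only [z, inner_add_left, real_inner_smul_left]
    linarith
  have hvv : 0 < ⟪v, v⟫ := real_inner_self_pos.2 hv
  have := hc.inner_le_supportFun hεs v
  rw [inner_add_left, real_inner_smul_left] at this
  nlinarith [mul_pos (show (0 : ℝ) < ε from hε) hvv]

theorem subset_of_supportFun_le [CompleteSpace E] {s t : Set E} (hs : IsCompact s)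
    (ht : Convex ℝ t) (htc : IsClosed t) (hne : t.Nonempty)
    (h : ∀ v ≠ 0, supportFun s v ≤ supportFun t v) : s ⊆ t := by
  intro p hp
  by_contra hpt
  obtain ⟨l, u, hlt, hu⟩ := geometric_hahn_banach_closed_point ht htc hpt
  set v := (InnerProductSpace.toDual ℝ E).symm l
  have hv : ∀ y, ⟪y, v⟫ = l y := fun y => by
    rw [real_inner_comm, InnerProductSpace.toDual_symm_apply]
  have htu : supportFun t v ≤ u := supportFun_le hne fun y hy => (hv y ▸ hlt y hy).le
  have hv0 : v ≠ 0 := by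
    rintro hv0
    obtain ⟨y, hy⟩ := hne
    have hy0 := hv y
    have hp0 := hv p
    simp only [hv0, inner_zero_right] at hy0 hp0
    linarith [hlt y hy]
  have := (hs.inner_le_supportFun hp v).trans (h v hv0)
  rw [hv] at this
  linarith

end SupportFunction

theorem vadd_smul_subset_vadd_smul {E : Type*} [AddCommGroup E] [Module ℝ E] {K : Set E}
    (hK : Convex ℝ K) {a b q : E} {s t : ℝ} (hs : 0 ≤ s) (ht : 0 < t) (hst : s ≤ t) (hq : q ∈ K)
    (heq : a + s • q = b + t • q) : a +ᵥ s • K ⊆ b +ᵥ t • K := by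
  rintro _ ⟨_, ⟨y, hy, rfl⟩, rfl⟩
  -- the homothety of ratio `s / t` centred at the common point `a + s • q`
  refine ⟨t • ((s / t) • y + (1 - s / t) • q), smul_mem_smul_set
    (hK hy hq (by positivity) (sub_nonneg.2 ((div_le_one ht).2 hst)) (by ring)), ?_⟩
  rw [eq_sub_of_add_eq heq.symm]
  simp only [vadd_eq_add]
  match_scalars <;> field_simp
  ring

section Homothets

variable {E : Type*} [NormedAddCommGroup E] [InnerProductSpace ℝ E] {ι : Type*} [Finite ι]
  {K : Set E} {x : ι → E} {τ : ι → ℝ}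

theorem exists_add_smul_eq_of_supportFun_max (hKc : IsCompact K) (hK : K.Nonempty)
    (hKsc : StrictConvex ℝ K) (hτ : ∀ i, 0 < τ i) (hconv : Convex ℝ (⋃ k, x k +ᵥ τ k • K))
    {v : E} (hv : v ≠ 0) {i j : ι}
    (hi : ∀ k, supportFun (x k +ᵥ τ k • K) v ≤ supportFun (x i +ᵥ τ i • K) v)
    (hj : ∀ k, supportFun (x k +ᵥ τ k • K) v ≤ supportFun (x j +ᵥ τ j • K) v) :
    ∃ q ∈ K, x i + τ i • q = x j + τ j • q := by
  obtain ⟨q, hq, hqv⟩ := hKc.exists_inner_eq_supportFun hK v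
  set p : ι → E := fun k => x k + τ k • q
  have hpL : ∀ k, p k ∈ x k +ᵥ τ k • K := fun k => vadd_mem_vadd_set (smul_mem_smul_set hq)
  have hpv : ∀ k, supportFun (x k +ᵥ τ k • K) v = ⟪p k, v⟫ := fun k =>
    supportFun_vadd_smul hKc hq hqv (x k) (hτ k).le
  set S := (⋃ k, x k +ᵥ τ k • K) ∩ {r | ⟪p i, v⟫ ≤ ⟪r, v⟫}
  have hS : Convex ℝ S := hconv.inter <| convex_halfSpace_ge
    ⟨fun a b => inner_add_left a b v, fun c a => real_inner_smul_left a v c⟩ _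
  -- by strict convexity, `x k +ᵥ τ k • K` meets `S` only in `p k`
  have hSp : S ⊆ range p := by
    rintro r ⟨hr, hrv⟩
    obtain ⟨k, hk⟩ := mem_iUnion.1 hr
    exact ⟨k, (hKsc.affinity (x k) (τ k)).eq_of_supportFun_le ((hKc.smul _).vadd _) hv
      (hpL k) hk (hpv k).le ((hi k).trans ((hpv i).trans_le hrv))⟩
  have hpS : ∀ k, ⟪p i, v⟫ ≤ ⟪p k, v⟫ → p k ∈ S := fun k hk => ⟨mem_iUnion.2 ⟨k, hpL k⟩, hk⟩
  have hpij : ⟪p i, v⟫ ≤ ⟪p j, v⟫ := hpv i ▸ hpv j ▸ hj i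
  exact ⟨q, hq, hS.subsingleton_of_finite ((finite_range p).subset hSp)
    (hpS i le_rfl) (hpS j hpij)⟩

theorem exists_iUnion_vadd_smul_eq_of_convex [CompleteSpace E] [Nonempty ι]
    (hE : 1 < Module.rank ℝ E) (hKc : IsCompact K) (hKsc : StrictConvex ℝ K)
    (hτ : ∀ i, 0 < τ i) (hconv : Convex ℝ (⋃ i, x i +ᵥ τ i • K)) :
    ∃ m, (⋃ i, x i +ᵥ τ i • K) = x m +ᵥ τ m • K := by
  rcases K.eq_empty_or_nonempty with rfl | hK
  · exact ⟨Classical.arbitrary ι, by simp⟩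
  set L : ι → Set E := fun i => x i +ᵥ τ i • K
  have hLc : ∀ i, IsCompact (L i) := fun i => (hKc.smul _).vadd _
  have hLne : ∀ i, (L i).Nonempty := fun i => hK.smul_set.vadd_set
  let A : ι → Set ({0}ᶜ : Set E) := fun i => {v | ∀ k, supportFun (L k) v ≤ supportFun (L i) v}
  have hA_mono : ∀ i j, L i ⊆ L j → A i ⊆ A j := fun i j h v hv k =>
    (hv k).trans (supportFun_mono h (hLne i) (hLc j) v)
  have : ConnectedSpace ({0}ᶜ : Set E) :=
    isConnected_iff_connectedSpace.1 (isConnected_compl_singleton_of_one_lt_rank hE 0)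
  obtain ⟨m, hm⟩ : ∃ m, A m = univ := by
    refine ConnectedSpace.exists_eq_univ_of_laminar_closed_cover (fun i => ?_)
      (fun v => Finite.exists_max fun k => supportFun (L k) v) ?_
    · simp only [A, ofPred_forall]
      exact isClosed_iInter fun k => isClosed_le
        ((hLc k).continuous_supportFun.comp continuous_subtype_val)
        ((hLc i).continuous_supportFun.comp continuous_subtype_val)
    · rintro i j ⟨v, hvi, hvj⟩
      obtain ⟨q, hq, hqij⟩ :=
        exists_add_smul_eq_of_supportFun_max hKc hK hKsc hτ hconv v.2 hvi hvj
      rcases le_total (τ i) (τ j) with h | h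
      · exact .inl (hA_mono i j
          (vadd_smul_subset_vadd_smul hKsc.convex (hτ i).le (hτ j) h hq hqij))
      · exact .inr (hA_mono j i
          (vadd_smul_subset_vadd_smul hKsc.convex (hτ j).le (hτ i) h hq hqij.symm))
  refine ⟨m, (iUnion_subset fun j => ?_).antisymm (subset_iUnion L m)⟩
  exact subset_of_supportFun_le (hLc j) ((hKsc.convex.smul _).vadd _) (hLc m).isClosed (hLne m)
    fun v hv => (show (⟨v, hv⟩ : ({0}ᶜ : Set E)) ∈ A m from hm ▸ mem_univ _) j

end Homothets

theorem stmt_11_general (K : Set (EuclideanSpace ℝ (Fin 2)))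
    (hKc : IsCompact K)
    (hKsc : StrictConvex ℝ K)
    (n : ℕ) (hn : 1 ≤ n) (x : Fin n → EuclideanSpace ℝ (Fin 2)) (τ : Fin n → ℝ)
    (hτ : ∀ i, 0 < τ i)
    (hconv : Convex ℝ (⋃ i, x i +ᵥ τ i • K)) :
    ∃ i' : Fin n, (⋃ i, x i +ᵥ τ i • K) = x i' +ᵥ τ i' • K := by
  have : Nonempty (Fin n) := ⟨⟨0, hn⟩⟩
  have hrank : 1 < Module.rank ℝ (EuclideanSpace ℝ (Fin 2)) := by
    rw [← Module.finrank_eq_rank, finrank_euclideanSpace_fin]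
    exact_mod_cast one_lt_two
  exact exists_iUnion_vadd_smul_eq_of_convex hrank hKc hKsc hτ hconv

/-- If `K ⊆ ℝ²` is a strictly convex body and `x i + τ i • K`, `i = 1, …, n`, are positive
homothets of `K` whose union is convex, then the union equals one of the homothets. -/
theorem stmt_11 (K : Set (EuclideanSpace ℝ (Fin 2)))
    (hKc : IsCompact K) (hKconv : Convex ℝ K) (hKint : (interior K).Nonempty)
    (hKsc : StrictConvex ℝ K)
    (n : ℕ) (hn : 1 ≤ n) (x : Fin n → EuclideanSpace ℝ (Fin 2)) (τ : Fin n → ℝ)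
    (hτ : ∀ i, 0 < τ i)
    (hconv : Convex ℝ (⋃ i, x i +ᵥ τ i • K)) :
    ∃ i' : Fin n, (⋃ i, x i +ᵥ τ i • K) = x i' +ᵥ τ i' • K :=
  stmt_11_general K hKc hKsc n hn x τ hτ hconv
end

section
/- Let $K$ be a strictly convex body in $\mathbb{R}^d$, $d \ge 2$, let $0 \le k \le d-2$, and let $\mathcal{K} = \{K_i = x_i + \tau_i K : i=1,\dots,n\}$, $\tau_i > 0$, be a $k$-impassable family, i.e., every $k$-dimensional affine subspace intersecting $\mathrm{conv}\left(\bigcup\mathcal{K}\right)$ intersects some $K_i$. Then $\bigcup \mathcal{K} = K_{i^*}$ where $\tau_{i^*} = \max_i \tau_i$. -/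
/-!
Let `C` be the convex hull of the union. Impassability forces every exposed face of `C` to be a
single point: a homothet of `K` meets a supporting hyperplane of `C` in at most one point, and
through any other point of the face there is a `k`-flat inside the hyperplane (there is room,
as `k ≤ d - 2`) missing these finitely many points. So if two members both support `C` in a
direction `u`, they touch it at the same point `x i + τ i • c = x j + τ j • c`, where `c` is the
support point of `K` in direction `u`, and one of the two members contains the other. The
directions `u ≠ 0` are covered by the closed sets on which a given member has the largest support
value; as `ℝ^d \ {0}` is connected, the member of largest ratio among those occurring there
contains all of them, and by comparing support functions it contains every member.
-/

open scoped Pointwise RealInnerProductSpace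
open Module Set

theorem Submodule.exists_le_finrank_eq {K V : Type*} [DivisionRing K] [AddCommGroup V]
    [Module K V] (p : Submodule K V) {k : ℕ} (hk : k ≤ finrank K p) :
    ∃ q ≤ p, finrank K q = k := by
  obtain ⟨f, hf⟩ := exists_linearIndependent_of_le_finrank hk
  refine ⟨span K (range (p.subtype ∘ f)), span_le.mpr ?_, ?_⟩
  · rintro _ ⟨i, rfl⟩
    exact (f i).2
  · rw [finrank_span_eq_card (hf.map' p.subtype p.ker_subtype), Fintype.card_fin]

-- The direction is taken inside the common kernel of `g` and of a functional vanishing at no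
-- `t - q` with `t ∈ T`; this kernel has codimension at most two.
theorem exists_affineSubspace_subset_levelSet_disjoint {K E : Type*} [Field K] [Infinite K]
    [AddCommGroup E] [Module K E] [FiniteDimensional K E] {k : ℕ} (hk : k + 2 ≤ finrank K E)
    (g : E →ₗ[K] K) {T : Set E} (hT : T.Finite) {q : E} (hq : q ∉ T) :
    ∃ A : AffineSubspace K E, finrank K A.direction = k ∧ q ∈ A ∧
      (∀ w ∈ A, g w = g q) ∧ Disjoint (A : Set E) T := by
  have : Finite T := hT.to_subtype
  obtain ⟨f, hf⟩ := Module.exists_dual_forall_apply_ne_zero (K := K) (fun t : T ↦ (t : E) - q)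
    (fun t ↦ sub_ne_zero.mpr (ne_of_mem_of_not_mem t.2 hq))
  have hker : k ≤ finrank K (LinearMap.ker (g.prod f)) := by
    have := (g.prod f).finrank_range_add_finrank_ker
    have := Submodule.finrank_le (LinearMap.range (g.prod f))
    rw [Module.finrank_prod, Module.finrank_self] at this
    omega
  obtain ⟨V, hV, hVk⟩ := (LinearMap.ker (g.prod f)).exists_le_finrank_eq hker
  have hmem : ∀ w ∈ AffineSubspace.mk' q V, g (w - q) = 0 ∧ f (w - q) = 0 := fun w hw ↦ by
    simpa [LinearMap.ker_prod] using hV (AffineSubspace.mem_mk'.mp hw)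
  refine ⟨AffineSubspace.mk' q V, by rwa [AffineSubspace.direction_mk'],
    AffineSubspace.self_mem_mk' q V, fun w hw ↦ ?_, Set.disjoint_left.mpr fun w hw hwT ↦ ?_⟩
  · simpa [sub_eq_zero] using (hmem w hw).1
  · exact hf ⟨w, hwT⟩ (hmem w hw).2

-- The midpoint of two maximizers would be an interior local maximum of `φ`.
theorem StrictConvex.eq_of_isMaxOn {E : Type*} [NormedAddCommGroup E] [NormedSpace ℝ E]
    {C : Set E} (hC : StrictConvex ℝ C) {φ : StrongDual ℝ E} (hφ : φ ≠ 0) {y z : E}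
    (hy : y ∈ C) (hz : z ∈ C) (hmy : IsMaxOn φ C y) (hmz : IsMaxOn φ C z) : y = z := by
  by_contra hyz
  have hm : (2⁻¹ : ℝ) • y + (2⁻¹ : ℝ) • z ∈ interior C :=
    hC hy hz hyz (by norm_num) (by norm_num) (by norm_num)
  have hφm : φ ((2⁻¹ : ℝ) • y + (2⁻¹ : ℝ) • z) = φ y := by
    have : φ y = φ z := le_antisymm (hmz hy) (hmy hz)
    simp only [map_add, map_smul, smul_eq_mul, this]
    ring
  have hmax : IsMaxOn φ C ((2⁻¹ : ℝ) • y + (2⁻¹ : ℝ) • z) := fun w hw ↦ hφm ▸ hmy hw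
  exact hφ ((hmax.isLocalMax (mem_interior_iff_mem_nhds.mp hm)).hasFDerivAt_eq_zero φ.hasFDerivAt)

theorem ConvexOn.isMaxOn_convexHull {E : Type*} [AddCommGroup E] [Module ℝ E] {f : E → ℝ}
    (hf : ConvexOn ℝ univ f) {s : Set E} {p : E} (h : IsMaxOn f s p) :
    IsMaxOn f (convexHull ℝ s) p := fun w hw ↦ by
  obtain ⟨w', hw', hle⟩ := hf.exists_ge_of_mem_convexHull (subset_univ s) hw
  exact hle.trans (h hw')

theorem IsPreconnected.forall_of_closed_cover {X ι : Type*} [TopologicalSpace X] [Finite ι]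
    {s : Set X} (hs : IsPreconnected s) {A : ι → Set X} (hA : ∀ i, IsClosed (A i))
    (hcover : s ⊆ ⋃ i, A i) {P : ι → Prop}
    (hP : ∀ i j, P i → (s ∩ A i ∩ A j).Nonempty → P j) {i₀ : ι} (hi₀ : P i₀)
    (hs₀ : (s ∩ A i₀).Nonempty) {j : ι} (hj : (s ∩ A j).Nonempty) : P j := by
  by_contra hPj
  have hcover' : s ⊆ (⋃ i : {i // P i}, A i) ∪ ⋃ i : {i // ¬P i}, A i := fun w hw ↦ by
    obtain ⟨i, hi⟩ := mem_iUnion.mp (hcover hw)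
    by_cases hPi : P i
    · exact Or.inl (mem_iUnion.mpr ⟨⟨i, hPi⟩, hi⟩)
    · exact Or.inr (mem_iUnion.mpr ⟨⟨i, hPi⟩, hi⟩)
  obtain ⟨w, hws, hwP, hwnP⟩ := isPreconnected_closed_iff.mp hs _ _
    (isClosed_iUnion_of_finite fun i : {i // P i} ↦ hA i)
    (isClosed_iUnion_of_finite fun i : {i // ¬P i} ↦ hA i) hcover'
    (hs₀.mono (inter_subset_inter_right s (subset_iUnion_of_subset ⟨i₀, hi₀⟩ subset_rfl)))
    (hj.mono (inter_subset_inter_right s (subset_iUnion_of_subset ⟨j, hPj⟩ subset_rfl)))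
  obtain ⟨⟨i, hPi⟩, hwi⟩ := mem_iUnion.mp hwP
  obtain ⟨⟨i', hPi'⟩, hwi'⟩ := mem_iUnion.mp hwnP
  exact hPi' (hP i i' hPi ⟨w, ⟨hws, hwi⟩, hwi'⟩)

section Homothety

variable {E : Type*} [AddCommGroup E] [Module ℝ E] {K : Set E}

theorem mem_vadd_smul_set {x w : E} {τ : ℝ} : w ∈ x +ᵥ τ • K ↔ ∃ z ∈ K, x + τ • z = w := by
  simp [mem_vadd_set, mem_smul_set]

-- The two sets are homothetic from their common point `x + τ • c`, and `K` is star-shaped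
-- about `c`.
theorem vadd_smul_subset_vadd_smul_s12 (hK : Convex ℝ K) {c x y : E} (hc : c ∈ K) {τ σ : ℝ}
    (hτ : 0 ≤ τ) (hτσ : τ ≤ σ) (h : x + τ • c = y + σ • c) :
    x +ᵥ τ • K ⊆ y +ᵥ σ • K := by
  rintro _ ⟨_, ⟨z, hz, rfl⟩, rfl⟩
  rcases (hτ.trans hτσ).eq_or_lt with rfl | hσ
  · obtain rfl : τ = 0 := le_antisymm hτσ hτ
    obtain rfl : x = y := by simpa using h
    exact mem_vadd_smul_set.mpr ⟨z, hz, rfl⟩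
  refine mem_vadd_smul_set.mpr ⟨c + (τ / σ) • (z - c),
    hK.add_smul_sub_mem hc hz ⟨div_nonneg hτ hσ.le, div_le_one_of_le₀ hτσ hσ.le⟩, ?_⟩
  rw [smul_add, smul_smul, mul_div_cancel₀ τ hσ.ne', ← add_assoc, ← h, smul_sub]
  exact (add_add_sub_cancel _ _ _).trans (vadd_eq_add _ _).symm

theorem vadd_smul_subset_or_subset (hK : Convex ℝ K) {c x y : E} (hc : c ∈ K) {τ σ : ℝ}
    (hτ : 0 ≤ τ) (hσ : 0 ≤ σ) (h : x + τ • c = y + σ • c) :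
    x +ᵥ τ • K ⊆ y +ᵥ σ • K ∨ y +ᵥ σ • K ⊆ x +ᵥ τ • K :=
  (le_total τ σ).imp (fun hle ↦ vadd_smul_subset_vadd_smul_s12 hK hc hτ hle h)
    (fun hle ↦ vadd_smul_subset_vadd_smul_s12 hK hc hσ hle h.symm)

end Homothety

section InnerProductSpace

variable {E : Type*} [NormedAddCommGroup E] [InnerProductSpace ℝ E]

theorem innerSL_ne_zero {u : E} (hu : u ≠ 0) : innerSL ℝ u ≠ 0 := fun h ↦
  hu (by simpa using congr($h u))

def IsImpassable {ι : Type*} (k : ℕ) (S : ι → Set E) : Prop :=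
  ∀ A : AffineSubspace ℝ E, finrank ℝ A.direction = k →
    ((A : Set E) ∩ convexHull ℝ (⋃ i, S i)).Nonempty → ∃ i, ((A : Set E) ∩ S i).Nonempty

theorem IsImpassable.eq_of_isMaxOn [FiniteDimensional ℝ E] {ι : Type*} [Finite ι]
    {S : ι → Set E} {k : ℕ} (hS : IsImpassable k S) (hk : k + 2 ≤ finrank ℝ E)
    (hsc : ∀ i, StrictConvex ℝ (S i)) {u : E} (hu : u ≠ 0) {y z : E}
    (hy : y ∈ convexHull ℝ (⋃ i, S i)) (hz : z ∈ convexHull ℝ (⋃ i, S i))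
    (hmy : IsMaxOn (⟪u, ·⟫) (convexHull ℝ (⋃ i, S i)) y)
    (hmz : IsMaxOn (⟪u, ·⟫) (convexHull ℝ (⋃ i, S i)) z) : y = z := by
  set C := convexHull ℝ (⋃ i, S i)
  set H := {w : E | ⟪u, w⟫ = ⟪u, y⟫}
  have hSC : ∀ i, S i ⊆ C := fun i ↦ (subset_iUnion S i).trans (subset_convexHull ℝ _)
  have hface : ∀ i, (S i ∩ H).Subsingleton := by
    rintro i a ⟨ha, hau⟩ b ⟨hb, hbu⟩
    have hmax : ∀ c ∈ S i ∩ H, IsMaxOn (innerSL ℝ u) (S i) c := fun c hc w hw ↦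
      (hmy (hSC i hw)).trans_eq hc.2.symm
    exact (hsc i).eq_of_isMaxOn (innerSL_ne_zero hu) ha hb (hmax a ⟨ha, hau⟩) (hmax b ⟨hb, hbu⟩)
  have hT : (⋃ i, S i ∩ H).Finite := finite_iUnion fun i ↦ (hface i).finite
  have hCH : C ∩ H ⊆ ⋃ i, S i ∩ H := by
    rintro q ⟨hqC, hqH⟩
    by_contra hqT
    obtain ⟨A, hAk, hqA, hAH, hAT⟩ :=
      exists_affineSubspace_subset_levelSet_disjoint hk (innerₛₗ ℝ u) hT hqT
    obtain ⟨i, r, hrA, hrS⟩ := hS A hAk ⟨q, hqA, hqC⟩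
    have hrH : r ∈ H := (by simpa using hAH r hrA : ⟪u, r⟫ = ⟪u, q⟫).trans hqH
    exact disjoint_left.mp hAT hrA (mem_iUnion.mpr ⟨i, hrS, hrH⟩)
  have hconv : Convex ℝ (C ∩ H) :=
    (convex_convexHull ℝ _).inter (convex_hyperplane (innerₛₗ ℝ u).isLinear _)
  have hzH : z ∈ H := le_antisymm (hmy hz) (hmz hy)
  exact hconv.isPreconnected.isDiscrete_iff_subsingleton.mp (hT.subset hCH).isDiscrete
    ⟨hy, rfl⟩ ⟨hz, hzH⟩

-- Meaningful for nonempty bounded `S` only: otherwise `sSup` takes the junk value `0`.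
noncomputable def supportFunction (S : Set E) (u : E) : ℝ := sSup ((⟪u, ·⟫) '' S)

theorem IsCompact.inner_le_supportFunction {S : Set E} (hS : IsCompact S) (u : E) {w : E}
    (hw : w ∈ S) : ⟪u, w⟫ ≤ supportFunction S u :=
  le_csSup (hS.bddAbove_image (continuous_const.inner continuous_id).continuousOn)
    (mem_image_of_mem _ hw)

theorem IsMaxOn.supportFunction_eq {S : Set E} {u p : E} (hp : p ∈ S)
    (h : IsMaxOn (⟪u, ·⟫) S p) : supportFunction S u = ⟪u, p⟫ :=
  IsGreatest.csSup_eq ⟨mem_image_of_mem _ hp, forall_mem_image.mpr fun _ hw ↦ h hw⟩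

theorem IsCompact.exists_isMaxOn_inner {S : Set E} (hS : IsCompact S) (hne : S.Nonempty)
    (u : E) : ∃ p ∈ S, IsMaxOn (⟪u, ·⟫) S p :=
  hS.exists_isMaxOn hne (continuous_const.inner continuous_id).continuousOn

theorem IsCompact.continuous_supportFunction {S : Set E} (hS : IsCompact S) :
    Continuous (supportFunction S) :=
  hS.continuous_sSup (continuous_fst.inner continuous_snd)

theorem supportFunction_mono {S T : Set E} (hS : S.Nonempty) (hT : IsCompact T) (hST : S ⊆ T)
    (u : E) : supportFunction S u ≤ supportFunction T u :=
  csSup_le (hS.image _) (forall_mem_image.mpr fun _ hw ↦ hT.inner_le_supportFunction u (hST hw))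

theorem subset_of_supportFunction_le [CompleteSpace E] {S T : Set E} (hS : IsCompact S)
    (hT : IsCompact T) (hTc : Convex ℝ T) (hTne : T.Nonempty)
    (h : ∀ u ≠ 0, supportFunction S u ≤ supportFunction T u) : S ⊆ T := by
  intro w hw
  by_contra hwT
  obtain ⟨f, c, hfT, hfw⟩ := geometric_hahn_banach_closed_point hTc hT.isClosed hwT
  set v := (InnerProductSpace.toDual ℝ E).symm f
  have hv : ∀ z, ⟪v, z⟫ = f z := fun z ↦ InnerProductSpace.toDual_symm_apply
  obtain ⟨p, hp, hmax⟩ := hT.exists_isMaxOn_inner hTne v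
  have hfp := hfT p hp
  have hv0 : v ≠ 0 := fun hv0 ↦ by
    rw [← hv, hv0, inner_zero_left] at hfp hfw
    linarith
  have hwp : ⟪v, w⟫ ≤ ⟪v, p⟫ :=
    (hS.inner_le_supportFunction v hw).trans ((h v hv0).trans_eq (hmax.supportFunction_eq hp))
  rw [hv, hv] at hwp
  linarith

variable {K : Set E}

theorem IsMaxOn.vadd_smul {u c : E} (x : E) {τ : ℝ} (hτ : 0 ≤ τ) (h : IsMaxOn (⟪u, ·⟫) K c) :
    IsMaxOn (⟪u, ·⟫) (x +ᵥ τ • K) (x + τ • c) := fun _ hw ↦ by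
  obtain ⟨z, hz, rfl⟩ := mem_vadd_smul_set.mp hw
  show ⟪u, x + τ • z⟫ ≤ ⟪u, x + τ • c⟫
  rw [inner_add_right, inner_add_right, inner_smul_right, inner_smul_right]
  have : ⟪u, z⟫ ≤ ⟪u, c⟫ := h hz
  gcongr

theorem IsCompact.vadd_smul (hK : IsCompact K) (x : E) (τ : ℝ) : IsCompact (x +ᵥ τ • K) :=
  (hK.smul τ).vadd x

theorem IsCompact.supportFunction_vadd_smul (hK : IsCompact K) (hKne : K.Nonempty) (x : E)
    {τ : ℝ} (hτ : 0 ≤ τ) (u : E) :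
    supportFunction (x +ᵥ τ • K) u = ⟪u, x⟫ + τ * supportFunction K u := by
  obtain ⟨c, hc, hmax⟩ := hK.exists_isMaxOn_inner hKne u
  rw [(hmax.vadd_smul x hτ).supportFunction_eq (mem_vadd_smul_set.mpr ⟨c, hc, rfl⟩),
    hmax.supportFunction_eq hc, inner_add_right, inner_smul_right]

theorem IsCompact.supportFunction_le_of_vadd_smul_subset (hK : IsCompact K)
    (hKne : K.Nonempty) {x y : E} {τ σ : ℝ} (hτ : 0 ≤ τ) (hσ : 0 ≤ σ)
    (h : x +ᵥ τ • K ⊆ y +ᵥ σ • K) (u : E) :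
    ⟪u, x⟫ + τ * supportFunction K u ≤ ⟪u, y⟫ + σ * supportFunction K u := by
  rw [← hK.supportFunction_vadd_smul hKne x hτ, ← hK.supportFunction_vadd_smul hKne y hσ]
  exact supportFunction_mono ((hKne.smul_set).vadd_set) (hK.vadd_smul y σ) h u

-- Compare support functions in two opposite directions `±v`, along which `K` has positive width.
theorem IsCompact.le_of_vadd_smul_subset [Nontrivial E] (hK : IsCompact K)
    (hKint : (interior K).Nonempty) {x y : E} {τ σ : ℝ} (hτ : 0 ≤ τ) (hσ : 0 ≤ σ)
    (h : x +ᵥ τ • K ⊆ y +ᵥ σ • K) : τ ≤ σ := by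
  obtain ⟨a, ha⟩ := hKint
  obtain ⟨ρ, hρ, hball⟩ := Metric.mem_nhds_iff.mp (mem_interior_iff_mem_nhds.mp ha)
  obtain ⟨v, hv⟩ := exists_norm_eq E (half_pos hρ).le
  have hav : a + v ∈ K := hball (by simpa [hv] using half_lt_self hρ)
  have hKne : K.Nonempty := ⟨a, interior_subset ha⟩
  have hwidth : 0 < supportFunction K v + supportFunction K (-v) := by
    have : 0 < ⟪v, a + v⟫ + ⟪-v, a⟫ := by
      rw [inner_add_right, inner_neg_left, real_inner_self_eq_norm_sq, hv]
      nlinarith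
    exact this.trans_le (add_le_add (hK.inner_le_supportFunction v hav)
      (hK.inner_le_supportFunction (-v) (interior_subset ha)))
  have h₁ := hK.supportFunction_le_of_vadd_smul_subset hKne hτ hσ h v
  have h₂ := hK.supportFunction_le_of_vadd_smul_subset hKne hτ hσ h (-v)
  rw [inner_neg_left, inner_neg_left] at h₂
  nlinarith

theorem IsCompact.eq_of_vadd_smul_subset (hK : IsCompact K) (hKne : K.Nonempty) {x y : E}
    {τ : ℝ} (hτ : 0 ≤ τ) (h : x +ᵥ τ • K ⊆ y +ᵥ τ • K) : x = y := by
  have := hK.supportFunction_le_of_vadd_smul_subset hKne hτ hτ h (x - y)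
  rw [← sub_eq_zero, ← inner_self_eq_zero (𝕜 := ℝ)]
  refine le_antisymm ?_ real_inner_self_nonneg
  rw [inner_sub_right]
  linarith

theorem IsCompact.vadd_smul_eq_of_subset_of_le [Nontrivial E] (hK : IsCompact K)
    (hKint : (interior K).Nonempty) {x y : E} {τ σ : ℝ} (hτ : 0 ≤ τ) (hσ : 0 ≤ σ)
    (h : x +ᵥ τ • K ⊆ y +ᵥ σ • K) (hστ : σ ≤ τ) : x +ᵥ τ • K = y +ᵥ σ • K := by
  obtain rfl : τ = σ := le_antisymm (hK.le_of_vadd_smul_subset hKint hτ hσ h) hστ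
  rw [hK.eq_of_vadd_smul_subset (hKint.mono interior_subset) hτ h]

end InnerProductSpace

section Impassable

variable {E : Type*} [NormedAddCommGroup E] [InnerProductSpace ℝ E] [FiniteDimensional ℝ E]
  {ι : Type*} [Finite ι] {K : Set E} {x : ι → E} {τ : ι → ℝ} {k : ℕ}

theorem IsImpassable.subset_or_subset_of_supportFunction
    (hS : IsImpassable k fun i ↦ x i +ᵥ τ i • K) (hk : k + 2 ≤ finrank ℝ E)
    (hKc : IsCompact K) (hKne : K.Nonempty) (hKsc : StrictConvex ℝ K) (hτ : ∀ i, 0 ≤ τ i)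
    {u : E} (hu : u ≠ 0) {i j : ι}
    (hi : ∀ m, supportFunction (x m +ᵥ τ m • K) u ≤ supportFunction (x i +ᵥ τ i • K) u)
    (hj : ∀ m, supportFunction (x m +ᵥ τ m • K) u ≤ supportFunction (x j +ᵥ τ j • K) u) :
    x i +ᵥ τ i • K ⊆ x j +ᵥ τ j • K ∨ x j +ᵥ τ j • K ⊆ x i +ᵥ τ i • K := by
  obtain ⟨c, hc, hmax⟩ := hKc.exists_isMaxOn_inner hKne u
  have hconv : ConvexOn ℝ univ (⟪u, ·⟫) := (innerₛₗ ℝ u).convexOn convex_univ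
  have htop : ∀ l, (∀ m, supportFunction (x m +ᵥ τ m • K) u ≤
      supportFunction (x l +ᵥ τ l • K) u) →
      x l + τ l • c ∈ convexHull ℝ (⋃ m, x m +ᵥ τ m • K) ∧
      IsMaxOn (⟪u, ·⟫) (convexHull ℝ (⋃ m, x m +ᵥ τ m • K)) (x l + τ l • c) := fun l hl ↦ by
    have hmem : x l + τ l • c ∈ x l +ᵥ τ l • K := mem_vadd_smul_set.mpr ⟨c, hc, rfl⟩
    refine ⟨subset_convexHull ℝ _ (mem_iUnion_of_mem l hmem), hconv.isMaxOn_convexHull ?_⟩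
    intro w hw
    obtain ⟨m, hm⟩ := mem_iUnion.mp hw
    calc ⟪u, w⟫ ≤ supportFunction (x m +ᵥ τ m • K) u :=
          (hKc.vadd_smul _ _).inner_le_supportFunction u hm
      _ ≤ supportFunction (x l +ᵥ τ l • K) u := hl m
      _ = ⟪u, x l + τ l • c⟫ := (hmax.vadd_smul (x l) (hτ l)).supportFunction_eq hmem
  obtain ⟨hpi, hmi⟩ := htop i hi
  obtain ⟨hpj, hmj⟩ := htop j hj
  exact vadd_smul_subset_or_subset hKsc.convex hc (hτ i) (hτ j)
    (hS.eq_of_isMaxOn hk (fun m ↦ (hKsc.smul _).vadd _) hu hpi hpj hmi hmj)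

theorem IsImpassable.exists_forall_subset [Nonempty ι]
    (hS : IsImpassable k fun i ↦ x i +ᵥ τ i • K) (hk : k + 2 ≤ finrank ℝ E)
    (hKc : IsCompact K) (hKint : (interior K).Nonempty) (hKsc : StrictConvex ℝ K)
    (hτ : ∀ i, 0 ≤ τ i) : ∃ i', ∀ j, x j +ᵥ τ j • K ⊆ x i' +ᵥ τ i' • K := by
  have : Nontrivial E := Module.nontrivial_of_finrank_pos (R := ℝ) (by omega)
  have hKne : K.Nonempty := hKint.mono interior_subset
  set S := fun i ↦ x i +ᵥ τ i • K
  have hSne : ∀ i, (S i).Nonempty := fun i ↦ hKne.smul_set.vadd_set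
  set A := fun i ↦ {u | ∀ m, supportFunction (S m) u ≤ supportFunction (S i) u}
  have hA : ∀ u, ∃ i, u ∈ A i := fun u ↦ Finite.exists_max fun i ↦ supportFunction (S i) u
  have hAc : ∀ i, IsClosed (A i) := fun i ↦ by
    simp only [A, ofPred_forall]
    exact isClosed_iInter fun m ↦ isClosed_le (hKc.vadd_smul _ _).continuous_supportFunction
      (hKc.vadd_smul _ _).continuous_supportFunction
  obtain ⟨u₀, hu₀⟩ := exists_ne (0 : E)
  obtain ⟨i', hi', hmax⟩ := Set.exists_max_image {i | ({0}ᶜ ∩ A i).Nonempty} τ (toFinite _)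
    (let ⟨i, hi⟩ := hA u₀; ⟨i, u₀, hu₀, hi⟩)
  have hactive : ∀ j, ({0}ᶜ ∩ A j).Nonempty → S j ⊆ S i' := fun j hj ↦
    (isConnected_compl_singleton_of_one_lt_rank (one_lt_rank_of_one_lt_finrank (by omega))
      0).isPreconnected.forall_of_closed_cover hAc (fun u _ ↦ mem_iUnion.mpr (hA u))
      (P := fun j ↦ S j ⊆ S i') (fun j j' hj ⟨u, ⟨hu, huj⟩, huj'⟩ ↦ by
        have hui' : u ∈ A i' := fun m ↦
          (huj m).trans (supportFunction_mono (hSne j) (hKc.vadd_smul _ _) hj u)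
        rcases hS.subset_or_subset_of_supportFunction hk hKc hKne hKsc hτ hu hui' huj' with h | h
        · exact (hKc.vadd_smul_eq_of_subset_of_le hKint (hτ _) (hτ _) h
            (hmax j' ⟨u, hu, huj'⟩)).symm.subset
        · exact h) subset_rfl hi' hj
  refine ⟨i', fun j ↦ subset_of_supportFunction_le (hKc.vadd_smul _ _) (hKc.vadd_smul _ _)
    ((hKsc.convex.smul _).vadd _) (hSne i') fun u hu ↦ ?_⟩
  obtain ⟨m, hm⟩ := hA u
  exact (hm j).trans
    (supportFunction_mono (hSne m) (hKc.vadd_smul _ _) (hactive m ⟨u, hu, hm⟩) u)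

theorem IsImpassable.exists_iUnion_eq [Nonempty ι]
    (hS : IsImpassable k fun i ↦ x i +ᵥ τ i • K) (hk : k + 2 ≤ finrank ℝ E)
    (hKc : IsCompact K) (hKint : (interior K).Nonempty) (hKsc : StrictConvex ℝ K)
    (hτ : ∀ i, 0 ≤ τ i) :
    ∃ i', (∀ i, τ i ≤ τ i') ∧ ⋃ i, x i +ᵥ τ i • K = x i' +ᵥ τ i' • K := by
  have : Nontrivial E := Module.nontrivial_of_finrank_pos (R := ℝ) (by omega)
  obtain ⟨i', hi'⟩ := hS.exists_forall_subset hk hKc hKint hKsc hτ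
  exact ⟨i', fun i ↦ hKc.le_of_vadd_smul_subset hKint (hτ i) (hτ i') (hi' i),
    (iUnion_subset hi').antisymm (subset_iUnion (fun i ↦ x i +ᵥ τ i • K) i')⟩

end Impassable

theorem stmt_12_general (d k n : ℕ) (hk : k + 2 ≤ d) (hn : 1 ≤ n)
    (K : Set (EuclideanSpace ℝ (Fin d)))
    (hKc : IsCompact K) (hKint : (interior K).Nonempty)
    (hKsc : StrictConvex ℝ K)
    (x : Fin n → EuclideanSpace ℝ (Fin d)) (τ : Fin n → ℝ) (hτ : ∀ i, 0 < τ i)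
    (hIP : ∀ A : AffineSubspace ℝ (EuclideanSpace ℝ (Fin d)),
      Module.finrank ℝ A.direction = k →
      ((A : Set (EuclideanSpace ℝ (Fin d))) ∩ convexHull ℝ (⋃ i, x i +ᵥ τ i • K)).Nonempty →
      ∃ i, ((A : Set (EuclideanSpace ℝ (Fin d))) ∩ (x i +ᵥ τ i • K)).Nonempty) :
    ∃ i' : Fin n, (∀ i, τ i ≤ τ i') ∧ (⋃ i, x i +ᵥ τ i • K) = x i' +ᵥ τ i' • K :=
  have : Nonempty (Fin n) := ⟨⟨0, hn⟩⟩
  IsImpassable.exists_iUnion_eq hIP (by rwa [finrank_euclideanSpace_fin]) hKc hKint hKsc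
    fun i ↦ (hτ i).le

/-- For a strictly convex body `K ⊆ ℝ^d` and a `k`-impassable family of positive homothets
with `0 ≤ k ≤ d - 2`, the union of the family equals the member with the largest
homothety ratio. -/
theorem stmt_12 (d k n : ℕ) (hd : 2 ≤ d) (hk : k + 2 ≤ d) (hn : 1 ≤ n)
    (K : Set (EuclideanSpace ℝ (Fin d)))
    (hKc : IsCompact K) (hKconv : Convex ℝ K) (hKint : (interior K).Nonempty)
    (hKsc : StrictConvex ℝ K)
    (x : Fin n → EuclideanSpace ℝ (Fin d)) (τ : Fin n → ℝ) (hτ : ∀ i, 0 < τ i)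
    (hIP : ∀ A : AffineSubspace ℝ (EuclideanSpace ℝ (Fin d)),
      Module.finrank ℝ A.direction = k →
      ((A : Set (EuclideanSpace ℝ (Fin d))) ∩ convexHull ℝ (⋃ i, x i +ᵥ τ i • K)).Nonempty →
      ∃ i, ((A : Set (EuclideanSpace ℝ (Fin d))) ∩ (x i +ᵥ τ i • K)).Nonempty) :
    ∃ i' : Fin n, (∀ i, τ i ≤ τ i') ∧ (⋃ i, x i +ᵥ τ i • K) = x i' +ᵥ τ i' • K :=
  stmt_12_general d k n hk hn K hKc hKint hKsc x τ hτ hIP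
end

section
/- Let $K_1 = x_1 + \tau_1 K$ and $K_2 = x_2 + \tau_2 K$ be positive homothets of a convex body $K$ in $\mathbb{R}^2$ whose union $K_1 \cup K_2$ is convex and such that neither is contained in the other. If $\tau_1 = \tau_2$ (they are translates) and $p$ is a boundary point of $K_1 \cup K_2$ lying in $K_1 \cap K_2$, then the translation vector $x_2 - x_1$ is parallel to every supporting line of $K_1 \cup K_2$ at $p$. -/
open scoped Pointwise RealInnerProductSpace

theorem add_sub_mem_vadd_set_of_mem_vadd_set {G : Type*} [AddCommGroup G] {s : Set G}
    {a b p : G} (hp : p ∈ a +ᵥ s) : p + (b - a) ∈ b +ᵥ s := by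
  obtain ⟨x, hx, rfl⟩ := hp
  exact ⟨x, hx, by simp only [vadd_eq_add]; abel⟩

theorem inner_eq_zero_of_forall_inner_le {E : Type*} [NormedAddCommGroup E]
    [InnerProductSpace ℝ E] {s : Set E} {u p d : E} (hmax : ∀ z ∈ s, ⟪u, z⟫ ≤ ⟪u, p⟫)
    (hadd : p + d ∈ s) (hsub : p - d ∈ s) : ⟪u, d⟫ = 0 := by
  have h₁ := hmax _ hadd
  have h₂ := hmax _ hsub
  rw [inner_add_right] at h₁
  rw [inner_sub_right] at h₂
  linarith

theorem stmt_15_general (K : Set (EuclideanSpace ℝ (Fin 2)))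
    (x₁ x₂ : EuclideanSpace ℝ (Fin 2)) (τ : ℝ)
    (p : EuclideanSpace ℝ (Fin 2))
    (hpmem : p ∈ (x₁ +ᵥ τ • K) ∩ (x₂ +ᵥ τ • K)) :
    ∀ u : EuclideanSpace ℝ (Fin 2), u ≠ 0 →
      (∀ z ∈ (x₁ +ᵥ τ • K) ∪ (x₂ +ᵥ τ • K), ⟪u, z⟫ ≤ ⟪u, p⟫) →
      ⟪u, x₂ - x₁⟫ = 0 := by
  intro u _ hu
  have hp₂ := add_sub_mem_vadd_set_of_mem_vadd_set (b := x₁) hpmem.2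
  rw [← neg_sub, ← sub_eq_add_neg] at hp₂
  exact inner_eq_zero_of_forall_inner_le hu
    (Or.inr (add_sub_mem_vadd_set_of_mem_vadd_set hpmem.1)) (Or.inl hp₂)

/-- If `K₁ = x₁ + τ • K` and `K₂ = x₂ + τ • K` are translates of a positive homothet of a
plane convex body `K` with convex union, neither contained in the other, and `p` is a
boundary point of the union lying in `K₁ ∩ K₂`, then `x₂ - x₁` is parallel to every
supporting line of the union at `p` (i.e. orthogonal to every outer normal at `p`). -/
theorem stmt_15 (K : Set (EuclideanSpace ℝ (Fin 2)))
    (hKc : IsCompact K) (hKconv : Convex ℝ K) (hKint : (interior K).Nonempty)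
    (x₁ x₂ : EuclideanSpace ℝ (Fin 2)) (τ : ℝ) (hτ : 0 < τ)
    (hconv : Convex ℝ ((x₁ +ᵥ τ • K) ∪ (x₂ +ᵥ τ • K)))
    (h12 : ¬ (x₁ +ᵥ τ • K) ⊆ (x₂ +ᵥ τ • K)) (h21 : ¬ (x₂ +ᵥ τ • K) ⊆ (x₁ +ᵥ τ • K))
    (p : EuclideanSpace ℝ (Fin 2))
    (hpbd : p ∈ frontier ((x₁ +ᵥ τ • K) ∪ (x₂ +ᵥ τ • K)))
    (hpmem : p ∈ (x₁ +ᵥ τ • K) ∩ (x₂ +ᵥ τ • K)) :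
    ∀ u : EuclideanSpace ℝ (Fin 2), u ≠ 0 →
      (∀ z ∈ (x₁ +ᵥ τ • K) ∪ (x₂ +ᵥ τ • K), ⟪u, z⟫ ≤ ⟪u, p⟫) →
      ⟪u, x₂ - x₁⟫ = 0 :=
  stmt_15_general K x₁ x₂ τ p hpmem
end

section
/- Place three unit-side regular triangles $T_1, T_2, T_3$ inside a regular triangle $T$ of side length $2 + \frac{2}{\sqrt 3}$ so that each side of $T$ contains a side of one $T_i$, the vertices of $T_i$ on that side dividing it into segments of lengths $\frac{2}{3}+\frac{1}{\sqrt 3}$, $1$, $\frac{1}{3}+\frac{1}{\sqrt 3}$ in counterclockwise order. Then for each pair $i \neq j$, the convex hull $\mathrm{conv}(T_i \cup T_j)$ intersects the remaining triangle $T_k$ ($\{i,j,k\}=\{1,2,3\}$); consequently $\{T_1,T_2,T_3\}$ is a non-separable family, but the smallest homothet of $T$ containing $T_1 \cup T_2 \cup T_3$ has homothety ratio $\frac{2}{3}+\frac{2}{3\sqrt 3} > 1$ times the sum $3$ of the homothety ratios. -/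
open scoped Pointwise

noncomputable section

/-- Side length of the big regular triangle. -/
def GG.s : ℝ := 2 + 2 / Real.sqrt 3

/-- First subdivision length on each side. -/
def GG.a : ℝ := 2 / 3 + 1 / Real.sqrt 3

/-- The big regular triangle `T` with vertices `(0,0)`, `(s,0)`, `(s/2, s√3/2)`. -/
def GG.T : Set (ℝ × ℝ) :=
  convexHull ℝ {(0, 0), (GG.s, 0), (GG.s / 2, GG.s * Real.sqrt 3 / 2)}

/-- The unit regular triangle on the side from `(0,0)` to `(s,0)`. -/
def GG.T1 : Set (ℝ × ℝ) :=
  convexHull ℝ {(GG.a, 0), (GG.a + 1, 0), (GG.a + 1 / 2, Real.sqrt 3 / 2)}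

/-- The unit regular triangle on the side from `(s,0)` to `(s/2, s√3/2)`. -/
def GG.T2 : Set (ℝ × ℝ) :=
  convexHull ℝ {(GG.s - GG.a / 2, GG.a * Real.sqrt 3 / 2),
    (GG.s - (GG.a + 1) / 2, (GG.a + 1) * Real.sqrt 3 / 2),
    (GG.s - GG.a / 2 - 1, GG.a * Real.sqrt 3 / 2)}

/-- The unit regular triangle on the side from `(s/2, s√3/2)` to `(0,0)`. -/
def GG.T3 : Set (ℝ × ℝ) :=
  convexHull ℝ {((GG.s - GG.a) / 2, (GG.s - GG.a) * Real.sqrt 3 / 2),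
    ((GG.s - GG.a - 1) / 2, (GG.s - GG.a - 1) * Real.sqrt 3 / 2),
    ((GG.s - GG.a) / 2 + 1 / 2, (GG.s - GG.a) * Real.sqrt 3 / 2 - Real.sqrt 3 / 2)}

/-!
A vertex `z` of `Tₖ` lies on the segment joining a vertex `x` of `Tᵢ` to a vertex `y` of `Tⱼ`,
namely `z = (2 - √3) • x + (√3 - 1) • y`, so `conv (Tᵢ ∪ Tⱼ)` meets `Tₖ`. Any three convex sets
with this property are non-separable: a line missing all of them leaves two of them in one open
half-plane, the convex hull of these two then forces the third one into the same half-plane, and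
so the line misses the hull of the union.

The big triangle `T` is the homothet `-(s a, 0) +ᵥ s • T₁` and contains all three `Tᵢ`. For the
minimality of `s`, take `ℓ₁ = -2y`, `ℓ₂ = √3 x + y`, `ℓ₃ = -√3 x + y`: they sum to zero and their
maxima on `T₁` sum to `√3`, so points `pᵢ` of any homothet `z +ᵥ σ • T₁` satisfy
`∑ ℓᵢ pᵢ ≤ √3 σ`. For the vertices of `T₁, T₂, T₃` lying on the three sides of `T` the left-hand
side is `√3 s`.
-/

open Set Real

section

variable {E : Type*} [AddCommGroup E] [Module ℝ E]

theorem Convex.subset_preimage_Iio_or_Ioi {S : Set E} (hS : Convex ℝ S) (f : E →ₗ[ℝ] ℝ) {c : ℝ}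
    (h : ¬ (f ⁻¹' {c} ∩ S).Nonempty) : S ⊆ f ⁻¹' Iio c ∨ S ⊆ f ⁻¹' Ioi c := by
  by_contra! hc
  obtain ⟨x, hxS, hx⟩ := not_subset.1 hc.1
  obtain ⟨y, hyS, hy⟩ := not_subset.1 hc.2
  simp only [mem_preimage, mem_Iio, mem_Ioi, not_lt] at hx hy
  obtain ⟨w, hwS, hw⟩ := (hS.linear_image f).ordConnected.out
    (mem_image_of_mem f hyS) (mem_image_of_mem f hxS) ⟨hy, hx⟩
  exact h ⟨w, hw, hwS⟩

theorem subset_of_convexHull_union_inter_nonempty {S S' A B C : Set E} (hS : Convex ℝ S)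
    (hSS' : Disjoint S S') (hA : A ⊆ S) (hB : B ⊆ S)
    (hABC : (convexHull ℝ (A ∪ B) ∩ C).Nonempty) (hC : C ⊆ S ∨ C ⊆ S') : C ⊆ S := by
  refine hC.resolve_right fun hCS' => ?_
  obtain ⟨p, hp, hpC⟩ := hABC
  exact hSS'.ne_of_mem (convexHull_min (union_subset hA hB) hS hp) (hCS' hpC) rfl

variable {A B C : Set E}

theorem union_subset_of_two_subset (hAB : (convexHull ℝ (A ∪ B) ∩ C).Nonempty)
    (hBC : (convexHull ℝ (B ∪ C) ∩ A).Nonempty) (hAC : (convexHull ℝ (A ∪ C) ∩ B).Nonempty)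
    {S S' : Set E} (hS : Convex ℝ S) (hSS' : Disjoint S S')
    (hA : A ⊆ S ∨ A ⊆ S') (hB : B ⊆ S ∨ B ⊆ S') (hC : C ⊆ S ∨ C ⊆ S')
    (h : A ⊆ S ∧ B ⊆ S ∨ B ⊆ S ∧ C ⊆ S ∨ A ⊆ S ∧ C ⊆ S) : A ∪ B ∪ C ⊆ S := by
  rcases h with ⟨hA, hB⟩ | ⟨hB, hC⟩ | ⟨hA, hC⟩
  · exact union_subset (union_subset hA hB)
      (subset_of_convexHull_union_inter_nonempty hS hSS' hA hB hAB hC)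
  · exact union_subset (union_subset
      (subset_of_convexHull_union_inter_nonempty hS hSS' hB hC hBC hA) hB) hC
  · exact union_subset (union_subset hA
      (subset_of_convexHull_union_inter_nonempty hS hSS' hA hC hAC hB)) hC

theorem nonempty_preimage_inter_of_convexHull_pair_inter
    (hAB : (convexHull ℝ (A ∪ B) ∩ C).Nonempty) (hBC : (convexHull ℝ (B ∪ C) ∩ A).Nonempty)
    (hAC : (convexHull ℝ (A ∪ C) ∩ B).Nonempty)
    (hA : Convex ℝ A) (hB : Convex ℝ B) (hC : Convex ℝ C) (f : E →ₗ[ℝ] ℝ) {c : ℝ}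
    (h : (f ⁻¹' {c} ∩ convexHull ℝ (A ∪ B ∪ C)).Nonempty) :
    (f ⁻¹' {c} ∩ A).Nonempty ∨ (f ⁻¹' {c} ∩ B).Nonempty ∨ (f ⁻¹' {c} ∩ C).Nonempty := by
  by_contra! hne
  obtain ⟨p, hpc, hp⟩ := h
  have hlt : Convex ℝ (f ⁻¹' Iio c) := (convex_Iio c).linear_preimage f
  have hgt : Convex ℝ (f ⁻¹' Ioi c) := (convex_Ioi c).linear_preimage f
  have hdisj : Disjoint (f ⁻¹' Iio c) (f ⁻¹' Ioi c) := Iio_disjoint_Ioi_same.preimage f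
  have hA' := hA.subset_preimage_Iio_or_Ioi f (not_nonempty_iff_eq_empty.2 hne.1)
  have hB' := hB.subset_preimage_Iio_or_Ioi f (not_nonempty_iff_eq_empty.2 hne.2.1)
  have hC' := hC.subset_preimage_Iio_or_Ioi f (not_nonempty_iff_eq_empty.2 hne.2.2)
  have hbelow := union_subset_of_two_subset hAB hBC hAC hlt hdisj hA' hB' hC'
  have habove := union_subset_of_two_subset hAB hBC hAC hgt hdisj.symm hA'.symm hB'.symm hC'.symm
  rcases (by tauto : A ∪ B ∪ C ⊆ f ⁻¹' Iio c ∨ A ∪ B ∪ C ⊆ f ⁻¹' Ioi c) with hS | hS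
  · exact (convexHull_min hS hlt hp).ne hpc
  · exact (convexHull_min hS hgt hp).ne' hpc

theorem add_smul_mem_convexHull_triple {x y z : E} {a b c : ℝ} (ha : 0 ≤ a) (hb : 0 ≤ b)
    (hc : 0 ≤ c) (habc : a + b + c = 1) : a • x + b • y + c • z ∈ convexHull ℝ {x, y, z} := by
  have hw : ∀ i ∈ Finset.univ, 0 ≤ ![a, b, c] i := by
    intro i _; fin_cases i <;> assumption
  have hmem : ∀ i ∈ Finset.univ, ![x, y, z] i ∈ convexHull ℝ {x, y, z} := by
    intro i _; fin_cases i <;> exact subset_convexHull ℝ _ (by simp)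
  simpa [Fin.sum_univ_three, add_assoc] using
    (convex_convexHull ℝ {x, y, z}).sum_mem hw (by simpa [Fin.sum_univ_three]) hmem

theorem sum_le_mul_sum_of_mem_vadd_smul {ι : Type*} [Fintype ι] {K : Set E} {σ : ℝ}
    (hσ : 0 ≤ σ) {z : E} {ℓ : ι → E →ₗ[ℝ] ℝ} (hℓ : ∑ i, ℓ i = 0) {m : ι → ℝ}
    (hm : ∀ i, ∀ q ∈ K, ℓ i q ≤ m i) {p : ι → E} (hp : ∀ i, p i ∈ z +ᵥ σ • K) :
    ∑ i, ℓ i (p i) ≤ σ * ∑ i, m i := by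
  choose w hw hwp using hp
  choose q hq hqw using hw
  calc ∑ i, ℓ i (p i) = (∑ i, ℓ i) z + σ * ∑ i, ℓ i (q i) := by
        simp only [← hwp, ← hqw, vadd_eq_add, map_add, map_smul, smul_eq_mul,
          Finset.sum_add_distrib, LinearMap.sum_apply, Finset.mul_sum]
    _ ≤ σ * ∑ i, m i := by
        rw [hℓ, LinearMap.zero_apply, zero_add]
        exact mul_le_mul_of_nonneg_left (Finset.sum_le_sum fun i _ => hm i _ (hq i)) hσ

end

theorem mem_convexHull_equilateral {l : ℝ} (hl : 0 < l) {p : ℝ × ℝ} (h₁ : 0 ≤ p.2)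
    (h₂ : p.2 ≤ √3 * p.1) (h₃ : p.2 ≤ √3 * (l - p.1)) :
    p ∈ convexHull ℝ {(0, 0), (l, 0), (l / 2, l * √3 / 2)} := by
  have h3 : √3 * √3 = 3 := mul_self_sqrt (by norm_num)
  have hd : 0 < √3 * l := by positivity
  convert add_smul_mem_convexHull_triple (x := ((0 : ℝ), (0 : ℝ))) (y := (l, 0))
    (z := (l / 2, l * √3 / 2)) (div_nonneg (sub_nonneg.2 h₃) hd.le)
    (div_nonneg (sub_nonneg.2 h₂) hd.le) (div_nonneg (mul_nonneg zero_le_two h₁) hd.le) ?_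
  · ext
    · simp only [Prod.smul_mk, smul_eq_mul, mul_zero, Prod.mk_add_mk, add_zero]
      field_simp
      grind
    · simp only [Prod.smul_mk, smul_eq_mul, mul_zero, Prod.mk_add_mk, zero_add]
      field_simp
  · field_simp
    ring

namespace GG

theorem sqrt_three_mul_self : √3 * √3 = 3 := mul_self_sqrt (by norm_num)

theorem one_lt_sqrt_three : 1 < √3 := by
  rw [lt_sqrt zero_le_one]; norm_num

theorem sqrt_three_lt_two : √3 < 2 := by
  rw [sqrt_lt' two_pos]; norm_num

theorem a_eq : a = 2 / 3 + √3 / 3 := by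
  have h0 : √3 ≠ 0 := by positivity
  rw [a]; field_simp; linarith [sqrt_three_mul_self]

theorem s_eq : s = 2 + 2 * √3 / 3 := by
  have h0 : √3 ≠ 0 := by positivity
  rw [s]; field_simp; linarith [sqrt_three_mul_self]

theorem mem_T {p : ℝ × ℝ} (h₁ : 0 ≤ p.2) (h₂ : p.2 ≤ √3 * p.1) (h₃ : p.2 ≤ √3 * (s - p.1)) :
    p ∈ T :=
  mem_convexHull_equilateral (by rw [s]; positivity) h₁ h₂ h₃

theorem T1_subset_T : T1 ⊆ T := by
  refine convexHull_min ?_ (convex_convexHull ℝ _)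
  simp only [insert_subset_iff, singleton_subset_iff]
  refine ⟨?_, ?_, ?_⟩ <;> apply mem_T <;> simp only [s_eq, a_eq] <;>
    nlinarith [sqrt_three_mul_self, one_lt_sqrt_three, sqrt_three_lt_two]

theorem T2_subset_T : T2 ⊆ T := by
  refine convexHull_min ?_ (convex_convexHull ℝ _)
  simp only [insert_subset_iff, singleton_subset_iff]
  refine ⟨?_, ?_, ?_⟩ <;> apply mem_T <;> simp only [s_eq, a_eq] <;>
    nlinarith [sqrt_three_mul_self, one_lt_sqrt_three, sqrt_three_lt_two]

theorem T3_subset_T : T3 ⊆ T := by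
  refine convexHull_min ?_ (convex_convexHull ℝ _)
  simp only [insert_subset_iff, singleton_subset_iff]
  refine ⟨?_, ?_, ?_⟩ <;> apply mem_T <;> simp only [s_eq, a_eq] <;>
    nlinarith [sqrt_three_mul_self, one_lt_sqrt_three, sqrt_three_lt_two]

theorem T_eq_vadd_smul_T1 : T = ((-(s * a), 0) : ℝ × ℝ) +ᵥ s • T1 := by
  rw [T, T1, ← convexHull_smul, ← convexHull_vadd]
  simp only [smul_set_insert, smul_set_singleton, vadd_set_insert, vadd_set_singleton,
    Prod.smul_mk, smul_eq_mul, vadd_eq_add, Prod.mk_add_mk]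
  congr 3 <;> ring_nf

theorem convexHull_union_inter_nonempty {A B C : Set (ℝ × ℝ)} {x y z : ℝ × ℝ}
    (hxyz : (2 - √3) • x + (√3 - 1) • y = z) (hx : x ∈ A) (hy : y ∈ B) (hz : z ∈ C) :
    (convexHull ℝ (A ∪ B) ∩ C).Nonempty :=
  ⟨z, segment_subset_convexHull (mem_union_left _ hx) (mem_union_right _ hy)
    ⟨_, _, by linarith [sqrt_three_lt_two], by linarith [one_lt_sqrt_three], by ring, hxyz⟩, hz⟩

theorem convexHull_T1_union_T2_inter_T3 : (convexHull ℝ (T1 ∪ T2) ∩ T3).Nonempty := by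
  have h : (2 - √3) • ((a, 0) : ℝ × ℝ) + (√3 - 1) • (s - a / 2 - 1, a * √3 / 2) =
      ((s - a) / 2 + 1 / 2, (s - a) * √3 / 2 - √3 / 2) := by
    ext <;> simp only [s_eq, a_eq, Prod.smul_mk, Prod.mk_add_mk, smul_eq_mul] <;>
      grind [sqrt_three_mul_self]
  exact convexHull_union_inter_nonempty h (subset_convexHull ℝ _ (by simp))
    (subset_convexHull ℝ _ (by simp)) (subset_convexHull ℝ _ (by simp))

theorem convexHull_T2_union_T3_inter_T1 : (convexHull ℝ (T2 ∪ T3) ∩ T1).Nonempty := by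
  have h : (2 - √3) • ((s - a / 2, a * √3 / 2) : ℝ × ℝ) +
      (√3 - 1) • ((s - a) / 2 + 1 / 2, (s - a) * √3 / 2 - √3 / 2) = (a + 1 / 2, √3 / 2) := by
    ext <;> simp only [s_eq, a_eq, Prod.smul_mk, Prod.mk_add_mk, smul_eq_mul] <;>
      grind [sqrt_three_mul_self]
  exact convexHull_union_inter_nonempty h (subset_convexHull ℝ _ (by simp))
    (subset_convexHull ℝ _ (by simp)) (subset_convexHull ℝ _ (by simp))

theorem convexHull_T1_union_T3_inter_T2 : (convexHull ℝ (T1 ∪ T3) ∩ T2).Nonempty := by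
  have h : (2 - √3) • (((s - a) / 2, (s - a) * √3 / 2) : ℝ × ℝ) +
      (√3 - 1) • (a + 1 / 2, √3 / 2) = (s - a / 2 - 1, a * √3 / 2) := by
    ext <;> simp only [s_eq, a_eq, Prod.smul_mk, Prod.mk_add_mk, smul_eq_mul] <;>
      grind [sqrt_three_mul_self]
  rw [union_comm]
  exact convexHull_union_inter_nonempty h (subset_convexHull ℝ _ (by simp))
    (subset_convexHull ℝ _ (by simp)) (subset_convexHull ℝ _ (by simp))

theorem s_le_of_union_subset_vadd_smul {σ : ℝ} (hσ : 0 ≤ σ) {z : ℝ × ℝ}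
    (h : T1 ∪ T2 ∪ T3 ⊆ z +ᵥ σ • T1) : s ≤ σ := by
  let ℓ : Fin 3 → (ℝ × ℝ) →ₗ[ℝ] ℝ := ![-(2 : ℝ) • LinearMap.snd ℝ ℝ ℝ,
    √3 • LinearMap.fst ℝ ℝ ℝ + LinearMap.snd ℝ ℝ ℝ, -√3 • LinearMap.fst ℝ ℝ ℝ + LinearMap.snd ℝ ℝ ℝ]
  have hℓ : ∑ i, ℓ i = 0 := by
    simp only [ℓ, Fin.sum_univ_three, Matrix.cons_val]
    module
  have hm : ∀ i, ∀ q ∈ T1, ℓ i q ≤ ![0, √3 * (a + 1), -(√3 * a)] i := by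
    intro i q hq
    refine convexHull_min ?_ (convex_halfSpace_le (ℓ i).isLinear _) hq
    simp only [insert_subset_iff, singleton_subset_iff, mem_ofPred_eq]
    fin_cases i <;>
      simp only [ℓ, Fin.zero_eta, Fin.mk_one, Fin.reduceFinMk, Matrix.cons_val_zero,
        Matrix.cons_val_one, Matrix.cons_val, LinearMap.add_apply, LinearMap.smul_apply,
        LinearMap.fst_apply, LinearMap.snd_apply, smul_eq_mul] <;>
      refine ⟨?_, ?_, ?_⟩ <;> linarith [sqrt_nonneg 3]
  have hp : ∀ i, ![((a, 0) : ℝ × ℝ), (s - a / 2, a * √3 / 2), ((s - a) / 2, (s - a) * √3 / 2)] i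
      ∈ z +ᵥ σ • T1 := by
    intro i
    fin_cases i
    · exact h (mem_union_left _ (mem_union_left _ (subset_convexHull ℝ _ (by simp))))
    · exact h (mem_union_left _ (mem_union_right _ (subset_convexHull ℝ _ (by simp))))
    · exact h (mem_union_right _ (subset_convexHull ℝ _ (by simp)))
  have hsum := sum_le_mul_sum_of_mem_vadd_smul hσ hℓ hm hp
  simp only [ℓ, Fin.sum_univ_three, Matrix.cons_val, LinearMap.add_apply, LinearMap.smul_apply,
    LinearMap.fst_apply, LinearMap.snd_apply, smul_eq_mul] at hsum
  exact le_of_mul_le_mul_left (by linarith) (by positivity : 0 < √3)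

end GG

/-- The Goodman–Goodman counterexample: the three unit triangles `T1, T2, T3` placed in the
regular triangle of side `2 + 2/√3` are such that the convex hull of any two of them meets
the third; consequently they form a non-separable family, yet the smallest homothet of the
unit triangle containing their union has ratio `3 · (2/3 + 2/(3√3))`, and
`2/3 + 2/(3√3) > 1`. -/
theorem stmt_16 :
    ((convexHull ℝ (GG.T1 ∪ GG.T2) ∩ GG.T3).Nonempty ∧
      (convexHull ℝ (GG.T2 ∪ GG.T3) ∩ GG.T1).Nonempty ∧
      (convexHull ℝ (GG.T1 ∪ GG.T3) ∩ GG.T2).Nonempty) ∧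
    (∀ (u : ℝ × ℝ) (c : ℝ), u ≠ 0 →
      ({y : ℝ × ℝ | u.1 * y.1 + u.2 * y.2 = c} ∩
          convexHull ℝ (GG.T1 ∪ GG.T2 ∪ GG.T3)).Nonempty →
      ({y : ℝ × ℝ | u.1 * y.1 + u.2 * y.2 = c} ∩ GG.T1).Nonempty ∨
        ({y : ℝ × ℝ | u.1 * y.1 + u.2 * y.2 = c} ∩ GG.T2).Nonempty ∨
        ({y : ℝ × ℝ | u.1 * y.1 + u.2 * y.2 = c} ∩ GG.T3).Nonempty) ∧
    (∃ z : ℝ × ℝ,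
      GG.T1 ∪ GG.T2 ∪ GG.T3 ⊆ z +ᵥ ((2 / 3 + 2 / (3 * Real.sqrt 3)) * 3) • GG.T1) ∧
    (∀ σ : ℝ, 0 < σ → (∃ z : ℝ × ℝ, GG.T1 ∪ GG.T2 ∪ GG.T3 ⊆ z +ᵥ σ • GG.T1) →
      (2 / 3 + 2 / (3 * Real.sqrt 3)) * 3 ≤ σ) ∧
    1 < 2 / 3 + 2 / (3 * Real.sqrt 3) := by
  have hratio : (2 / 3 + 2 / (3 * Real.sqrt 3)) * 3 = GG.s := by rw [GG.s]; ring
  refine ⟨⟨GG.convexHull_T1_union_T2_inter_T3, GG.convexHull_T2_union_T3_inter_T1,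
    GG.convexHull_T1_union_T3_inter_T2⟩, fun u c _ h => ?_, ⟨(-(GG.s * GG.a), 0), ?_⟩,
    fun σ hσ ⟨z, hz⟩ => hratio ▸ GG.s_le_of_union_subset_vadd_smul hσ.le hz, ?_⟩
  · exact nonempty_preimage_inter_of_convexHull_pair_inter GG.convexHull_T1_union_T2_inter_T3
      GG.convexHull_T2_union_T3_inter_T1 GG.convexHull_T1_union_T3_inter_T2
      (convex_convexHull ℝ _) (convex_convexHull ℝ _) (convex_convexHull ℝ _)
      (u.1 • LinearMap.fst ℝ ℝ ℝ + u.2 • LinearMap.snd ℝ ℝ ℝ) h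
  · rw [hratio, ← GG.T_eq_vadd_smul_T1]
    exact union_subset (union_subset GG.T1_subset_T GG.T2_subset_T) GG.T3_subset_T
  · have : 1 / 3 < 2 / (3 * Real.sqrt 3) := by
      rw [lt_div_iff₀ (by positivity)]
      linarith [GG.sqrt_three_lt_two]
    linarith

end
end
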